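/- arXiv:1905.07452 — 11 statements merged into one kernel-verified Lean document; each statement's English description precedes it below -/
import Mathlib

section
/- If f(s) = a_0 + a_1 s + ... + a_n s^n is a Hurwitz stable real polynomial with positive coefficients, then there exists ε > 0 such that for every a_{n+1} ∈ (0, ε) the polynomial F(s) = f(s) + a_{n+1} s^{n+1} is Hurwitz stable. -/
/-- A real polynomial is Hurwitz stable if all its complex zeros have negative real parts. -/
def HurwitzStable (f : Polynomial ℝ) : Prop :=
  ∀ z : ℂ, Polynomial.aeval z f = 0 → z.re < 0

/-!
On the compact set `{‖z‖ ≤ R, 0 ≤ re z}` the polynomial `f` has no zeros, so a small enough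
perturbation `c z ^ (n + 1)` creates none there. Outside the disc no `c ≥ 0` creates one either:
for `re z ≥ 0` we have `‖c z + aₙ‖ ≥ aₙ`, so `‖c z ^ (n + 1) + aₙ z ^ n‖ ≥ aₙ ‖z‖ ^ n` dominates the
lower terms of `f` once `‖z‖` exceeds a bound `R` that does not depend on `c`.
-/

open Polynomial Filter Topology Metric

theorem IsCompact.eventually_forall_add_smul_ne_zero {X 𝕜 E : Type*} [TopologicalSpace X]
    [Semiring 𝕜] [TopologicalSpace 𝕜] [AddCommMonoid E] [TopologicalSpace E] [T1Space E]
    [Module 𝕜 E] [ContinuousSMul 𝕜 E] [ContinuousAdd E] {K : Set X} (hK : IsCompact K)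
    {g h : X → E} (hg : Continuous g) (hh : Continuous h) (hgK : ∀ x ∈ K, g x ≠ 0) :
    ∀ᶠ c in 𝓝 (0 : 𝕜), ∀ x ∈ K, g x + c • h x ≠ 0 := by
  refine hK.eventually_forall_of_forall_eventually fun x hx => ?_
  have hcont : Continuous fun p : 𝕜 × X => g p.2 + p.1 • h p.2 := by fun_prop
  exact hcont.continuousAt.eventually_ne (by simpa using hgK x hx)

theorem aeval_add_C_mul_X_pow {R A : Type*} [CommSemiring R] [Semiring A] [Algebra R A]
    (p : R[X]) (c : R) (n : ℕ) (x : A) :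
    aeval x (p + C c * X ^ n) = aeval x p + c • x ^ n := by
  simp [Algebra.smul_def]

theorem norm_sum_smul_pow_mul_le {z : ℂ} (hz : 1 ≤ ‖z‖) (b : ℕ → ℝ) (n : ℕ) :
    ‖∑ i ∈ Finset.range n, b i • z ^ i‖ * ‖z‖ ≤ (∑ i ∈ Finset.range n, |b i|) * ‖z‖ ^ n := by
  calc ‖∑ i ∈ Finset.range n, b i • z ^ i‖ * ‖z‖
      ≤ ∑ i ∈ Finset.range n, ‖b i • z ^ i‖ * ‖z‖ := by
        rw [← Finset.sum_mul]; gcongr; exact norm_sum_le _ _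
    _ ≤ ∑ i ∈ Finset.range n, |b i| * ‖z‖ ^ n := by
        refine Finset.sum_le_sum fun i hi => ?_
        rw [norm_smul, norm_pow, Real.norm_eq_abs, mul_assoc, ← pow_succ]
        gcongr
        exact Finset.mem_range.1 hi
    _ = (∑ i ∈ Finset.range n, |b i|) * ‖z‖ ^ n := (Finset.sum_mul ..).symm

theorem norm_le_of_aeval_add_C_mul_X_pow_eq_zero {p : ℝ[X]} {n : ℕ} (hdeg : p.natDegree ≤ n)
    (hlead : 0 < p.coeff n) {c : ℝ} (hc : 0 ≤ c) {z : ℂ} (hz : 0 ≤ z.re)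
    (hroot : aeval z (p + C c * X ^ (n + 1)) = 0) :
    ‖z‖ ≤ max 1 ((∑ i ∈ Finset.range n, |p.coeff i|) / p.coeff n) := by
  rcases le_or_gt ‖z‖ 1 with hz1 | hz1
  · exact le_max_of_le_left hz1
  refine le_max_of_le_right ((le_div_iff₀ hlead).2 ?_)
  set S := ∑ i ∈ Finset.range n, p.coeff i • z ^ i
  have hS : z ^ n * (c * z + p.coeff n) = -S := by
    rw [aeval_add_C_mul_X_pow, aeval_eq_sum_range' (Nat.lt_succ_of_le hdeg),
      Finset.sum_range_succ, Complex.real_smul, Complex.real_smul] at hroot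
    linear_combination hroot
  have hhalf : p.coeff n ≤ ‖(c : ℂ) * z + p.coeff n‖ := by
    refine le_trans ?_ (Complex.re_le_norm _)
    simpa using mul_nonneg hc hz
  have hpow : 0 < ‖z‖ ^ n := by positivity
  refine le_of_mul_le_mul_right ?_ hpow
  calc ‖z‖ * p.coeff n * ‖z‖ ^ n = ‖z‖ ^ n * p.coeff n * ‖z‖ := by ring
    _ ≤ ‖z ^ n * (c * z + p.coeff n)‖ * ‖z‖ := by
        rw [norm_mul, norm_pow]; gcongr
    _ = ‖S‖ * ‖z‖ := by rw [hS, norm_neg]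
    _ ≤ (∑ i ∈ Finset.range n, |p.coeff i|) * ‖z‖ ^ n := norm_sum_smul_pow_mul_le hz1.le _ n

theorem HurwitzStable.eventually_add_C_mul_X_pow {p : ℝ[X]} {n : ℕ} (hdeg : p.natDegree ≤ n)
    (hlead : 0 < p.coeff n) (hp : HurwitzStable p) :
    ∀ᶠ c in 𝓝[>] (0 : ℝ), HurwitzStable (p + C c * X ^ (n + 1)) := by
  set R := max 1 ((∑ i ∈ Finset.range n, |p.coeff i|) / p.coeff n)
  set K := closedBall (0 : ℂ) R ∩ {z | 0 ≤ z.re}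
  have hK : IsCompact K :=
    (isCompact_closedBall 0 R).inter_right (isClosed_le continuous_const Complex.continuous_re)
  have hpK : ∀ z ∈ K, aeval z p ≠ 0 := fun z hz h0 => (hp z h0).not_ge hz.2
  have hsmall := hK.eventually_forall_add_smul_ne_zero (𝕜 := ℝ) p.continuous_aeval
    (continuous_pow (n + 1)) hpK
  filter_upwards [nhdsWithin_le_nhds hsmall, self_mem_nhdsWithin] with c hc hc0 z hz
  by_contra! hre
  have hzR : ‖z‖ ≤ R := norm_le_of_aeval_add_C_mul_X_pow_eq_zero hdeg hlead hc0.le hre hz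
  exact hc z ⟨mem_closedBall_zero_iff.2 hzR, hre⟩ (by rwa [← aeval_add_C_mul_X_pow])

theorem stable_add_small_leading_general (n : ℕ) (a : ℕ → ℝ) (ha : ∀ i ≤ n, 0 < a i)
    (hf : HurwitzStable (∑ i ∈ Finset.range (n + 1), Polynomial.C (a i) * Polynomial.X ^ i)) :
    ∃ ε > 0, ∀ c : ℝ, 0 < c → c < ε →
      HurwitzStable ((∑ i ∈ Finset.range (n + 1), Polynomial.C (a i) * Polynomial.X ^ i) +
        Polynomial.C c * Polynomial.X ^ (n + 1)) := by
  have hdeg : (∑ i ∈ Finset.range (n + 1), C (a i) * X ^ i).natDegree ≤ n :=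
    natDegree_sum_le_of_forall_le _ _ fun i hi =>
      (natDegree_C_mul_X_pow_le _ _).trans (Nat.lt_succ_iff.1 (Finset.mem_range.1 hi))
  have hlead : (∑ i ∈ Finset.range (n + 1), C (a i) * X ^ i).coeff n = a n := by
    simp [finsetSum_coeff]
  obtain ⟨ε, hε, hstable⟩ := (nhdsGT_basis 0).eventually_iff.1
    (hf.eventually_add_C_mul_X_pow hdeg (hlead ▸ ha n le_rfl))
  exact ⟨ε, hε, fun c hc hcε => hstable ⟨hc, hcε⟩⟩

theorem stable_add_small_leading (n : ℕ) (hn : 1 ≤ n) (a : ℕ → ℝ) (ha : ∀ i ≤ n, 0 < a i)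
    (hf : HurwitzStable (∑ i ∈ Finset.range (n + 1), Polynomial.C (a i) * Polynomial.X ^ i)) :
    ∃ ε > 0, ∀ c : ℝ, 0 < c → c < ε →
      HurwitzStable ((∑ i ∈ Finset.range (n + 1), Polynomial.C (a i) * Polynomial.X ^ i) +
        Polynomial.C c * Polynomial.X ^ (n + 1)) :=
  stable_add_small_leading_general n a ha hf
end

section
/- Let f be a Hurwitz stable real polynomial of degree n with positive coefficients, and let N > n. Then for every ε > 0 there exist positive numbers a_{n+1}, ..., a_N, all in (0, ε), such that the polynomial F(s) = f(s) + a_{n+1} s^{n+1} + ... + a_N s^N is Hurwitz stable. -/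
open Polynomial Filter Topology Bornology Asymptotics

section
variable {R : Type*} [Semiring R]

lemma coeff_sum_range_C_mul_X_pow (a : ℕ → R) (n : ℕ) :
    (∑ i ∈ Finset.range (n + 1), C (a i) * X ^ i).coeff n = a n := by
  simp

lemma natDegree_sum_range_C_mul_X_pow {a : ℕ → R} {n : ℕ} (hn : a n ≠ 0) :
    (∑ i ∈ Finset.range (n + 1), C (a i) * X ^ i).natDegree = n := by
  refine natDegree_eq_of_le_of_coeff_ne_zero ?_ (by rwa [coeff_sum_range_C_mul_X_pow])
  exact natDegree_sum_le_of_forall_le _ _ fun i hi ↦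
    (natDegree_C_mul_X_pow_le _ _).trans (Finset.mem_range_succ_iff.mp hi)

lemma leadingCoeff_sum_range_C_mul_X_pow {a : ℕ → R} {n : ℕ} (hn : a n ≠ 0) :
    (∑ i ∈ Finset.range (n + 1), C (a i) * X ^ i).leadingCoeff = a n := by
  rw [leadingCoeff, natDegree_sum_range_C_mul_X_pow hn, coeff_sum_range_C_mul_X_pow]

lemma natDegree_add_C_mul_X_pow_succ (p : R[X]) {δ : R} (hδ : δ ≠ 0) :
    (p + C δ * X ^ (p.natDegree + 1)).natDegree = p.natDegree + 1 := by
  rw [natDegree_add_eq_right_of_natDegree_lt] <;> rw [natDegree_C_mul_X_pow _ _ hδ]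
  omega

lemma leadingCoeff_add_C_mul_X_pow_succ (p : R[X]) {δ : R} (hδ : δ ≠ 0) :
    (p + C δ * X ^ (p.natDegree + 1)).leadingCoeff = δ := by
  rw [leadingCoeff, natDegree_add_C_mul_X_pow_succ p hδ]
  simp

end

lemma eventually_aeval_add_C_mul_X_pow_ne_zero {g : ℝ[X]} (hg : 0 < g.leadingCoeff) :
    ∀ᶠ z : ℂ in cobounded ℂ, ∀ δ : ℝ, 0 ≤ δ → 0 ≤ z.re →
      aeval z g + (δ : ℂ) * z ^ (g.natDegree + 1) ≠ 0 := by
  set P := g.map (algebraMap ℝ ℂ)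
  set c : ℝ := g.leadingCoeff
  have hP : P.eval ~[cobounded ℂ] fun z ↦ (c : ℂ) * z ^ g.natDegree := by
    simpa [P, c, natDegree_map] using isEquivalent_cobounded_leading_monomial (P := P)
  filter_upwards [hP.isLittleO.def (c := 1 / 2) (by norm_num),
    eventually_ne_cobounded (0 : ℂ)] with z hz hz0 δ hδ hre hroot
  have hfac : P.eval z - c * z ^ g.natDegree = -(z ^ g.natDegree * (δ * z + c)) := by
    rw [eval_map_algebraMap]; linear_combination hroot
  have hlow : c ≤ ‖(δ : ℂ) * z + c‖ := by
    simpa using (Complex.re_le_norm _).trans' (by simp; positivity : c ≤ ((δ : ℂ) * z + c).re)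
  have hle : ‖z‖ ^ g.natDegree * c ≤ 1 / 2 * (‖z‖ ^ g.natDegree * c) := by
    calc ‖z‖ ^ g.natDegree * c ≤ ‖z‖ ^ g.natDegree * ‖(δ : ℂ) * z + c‖ := by gcongr
      _ ≤ _ := by simpa [hfac, norm_mul, abs_of_pos hg, mul_comm] using hz
  have hpos : 0 < ‖z‖ ^ g.natDegree * c := by positivity
  linarith

theorem HurwitzStable.exists_add_C_mul_X_pow {g : ℝ[X]} (hg : HurwitzStable g)
    (hlc : 0 < g.leadingCoeff) {ε : ℝ} (hε : 0 < ε) :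
    ∃ δ, 0 < δ ∧ δ < ε ∧ HurwitzStable (g + C δ * X ^ (g.natDegree + 1)) := by
  obtain ⟨R, -, hfar⟩ :=
    hasBasis_cobounded_norm.eventually_iff.mp (eventually_aeval_add_C_mul_X_pow_ne_zero hlc)
  set K := Metric.closedBall (0 : ℂ) R ∩ {z | 0 ≤ z.re}
  have hK : IsCompact K :=
    (isCompact_closedBall _ _).inter_right (isClosed_le continuous_const Complex.continuous_re)
  have hnear : ∀ᶠ δ : ℝ in 𝓝 0, ∀ z ∈ K, aeval z g + (δ : ℂ) * z ^ (g.natDegree + 1) ≠ 0 := by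
    refine hK.eventually_forall_of_forall_eventually fun z hz ↦ ?_
    have hcont : Continuous fun p : ℝ × ℂ ↦ aeval p.2 g + (p.1 : ℂ) * p.2 ^ (g.natDegree + 1) := by
      fun_prop
    refine hcont.continuousAt.eventually_ne ?_
    simpa using fun h ↦ (hg z h).not_ge hz.2
  obtain ⟨δ, hδK, hδ⟩ := ((hnear.filter_mono nhdsWithin_le_nhds).and (Ioo_mem_nhdsGT hε)).exists
  refine ⟨δ, hδ.1, hδ.2, fun z hz ↦ ?_⟩
  replace hz : aeval z g + (δ : ℂ) * z ^ (g.natDegree + 1) = 0 := by simpa using hz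
  by_contra! hre
  rcases lt_or_ge ‖z‖ R with hzR | hzR
  · exact hδK z ⟨by simpa using hzR.le, hre⟩ hz
  · exact hfar hzR δ hδ.1.le hre hz

theorem HurwitzStable.exists_add_sum_C_mul_X_pow {p : ℝ[X]} (hp : HurwitzStable p)
    (hlc : 0 < p.leadingCoeff) {ε : ℝ} (hε : 0 < ε) {N : ℕ} (hN : p.natDegree ≤ N) :
    ∃ b : ℕ → ℝ, (∀ i, 0 < b i ∧ b i < ε) ∧
      HurwitzStable (p + ∑ i ∈ Finset.Icc (p.natDegree + 1) N, C (b i) * X ^ i) ∧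
      (p + ∑ i ∈ Finset.Icc (p.natDegree + 1) N, C (b i) * X ^ i).natDegree = N ∧
      0 < (p + ∑ i ∈ Finset.Icc (p.natDegree + 1) N, C (b i) * X ^ i).leadingCoeff := by
  induction N, hN using Nat.le_induction with
  | base => exact ⟨fun _ ↦ ε / 2, fun _ ↦ ⟨by positivity, by linarith⟩, by simpa using ⟨hp, hlc⟩⟩
  | succ N hN ih =>
    obtain ⟨b, hb, hq, hdeg, hqlc⟩ := ih
    set q := p + ∑ i ∈ Finset.Icc (p.natDegree + 1) N, C (b i) * X ^ i
    obtain ⟨δ, hδ, hδε, hstable⟩ := hq.exists_add_C_mul_X_pow hqlc hε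
    have hsum : p + ∑ i ∈ Finset.Icc (p.natDegree + 1) (N + 1),
        C (Function.update b (N + 1) δ i) * X ^ i = q + C δ * X ^ (q.natDegree + 1) := by
      rw [Finset.sum_Icc_succ_top (by omega), Function.update_self, hdeg, ← add_assoc]
      congr 2
      refine Finset.sum_congr rfl fun i hi ↦ ?_
      rw [Function.update_of_ne (by grind)]
    refine ⟨Function.update b (N + 1) δ, fun i ↦ ?_, ?_⟩
    · rcases eq_or_ne i (N + 1) with rfl | hi
      · simpa using ⟨hδ, hδε⟩
      · rw [Function.update_of_ne hi]
        exact hb i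
    · rw [hsum, natDegree_add_C_mul_X_pow_succ q hδ.ne', leadingCoeff_add_C_mul_X_pow_succ q hδ.ne']
      exact ⟨hstable, by rw [hdeg], hδ⟩

theorem stable_extension_general (n N : ℕ) (hN : n < N) (a : ℕ → ℝ)
    (ha : ∀ i ≤ n, 0 < a i)
    (hf : HurwitzStable (∑ i ∈ Finset.range (n + 1), Polynomial.C (a i) * Polynomial.X ^ i)) :
    ∀ ε > 0, ∃ b : ℕ → ℝ,
      (∀ i, n + 1 ≤ i → i ≤ N → 0 < b i ∧ b i < ε) ∧
      HurwitzStable ((∑ i ∈ Finset.range (n + 1), Polynomial.C (a i) * Polynomial.X ^ i) +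
        ∑ i ∈ Finset.Icc (n + 1) N, Polynomial.C (b i) * Polynomial.X ^ i) := by
  intro ε hε
  have han : 0 < a n := ha n le_rfl
  have hdeg := natDegree_sum_range_C_mul_X_pow han.ne'
  have hlc : 0 < (∑ i ∈ Finset.range (n + 1), C (a i) * X ^ i).leadingCoeff := by
    rwa [leadingCoeff_sum_range_C_mul_X_pow han.ne']
  obtain ⟨b, hb, hstable, -⟩ := hf.exists_add_sum_C_mul_X_pow hlc hε (hdeg.trans_le hN.le)
  rw [hdeg] at hstable
  exact ⟨b, fun i _ _ ↦ hb i, hstable⟩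

theorem stable_extension (n N : ℕ) (hn : 1 ≤ n) (hN : n < N) (a : ℕ → ℝ)
    (ha : ∀ i ≤ n, 0 < a i)
    (hf : HurwitzStable (∑ i ∈ Finset.range (n + 1), Polynomial.C (a i) * Polynomial.X ^ i)) :
    ∀ ε > 0, ∃ b : ℕ → ℝ,
      (∀ i, n + 1 ≤ i → i ≤ N → 0 < b i ∧ b i < ε) ∧
      HurwitzStable ((∑ i ∈ Finset.range (n + 1), Polynomial.C (a i) * Polynomial.X ^ i) +
        ∑ i ∈ Finset.Icc (n + 1) N, Polynomial.C (b i) * Polynomial.X ^ i) :=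
  stable_extension_general n N hN a ha hf
end

section
/- If f is a Hurwitz stable real polynomial of degree n with positive coefficients, then for every positive integer k there exists a polynomial p with positive coefficients and degree at most k−1 such that the polynomial s ↦ p(s) + s^k f(s) is Hurwitz stable. -/
/-!
Adding one positive coefficient at a time suffices: if `F` is Hurwitz stable with `F(0) > 0`,
then so is `ε + s F(s)` for small `ε > 0`, and this new polynomial again has positive constant
term; `k` such steps produce `p(s) + s^k f(s)`.

For the single step, let `Re z ≥ 0` and `ε + z F(z) = 0`. Close to `0` we have `Re F(z) > 0`, and
multiplying the equation by `conj z` gives `ε Re z + |z|² Re F(z) = 0`, which is impossible. Away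
from `0`, `|z F(z)|` is bounded below on the closed right half-plane by some `m > 0`, because a
polynomial maps closed sets to closed sets and `z F(z)` has no zero there; `ε < m` excludes these
roots as well.
-/

open Polynomial Finset

theorem Polynomial.exists_pos_le_norm_eval_of_isClosed {R : Type*} [NormedField R] [ProperSpace R]
    (P : R[X]) {S : Set R} (hS : IsClosed S) (hP : ∀ z ∈ S, P.eval z ≠ 0) :
    ∃ m > 0, ∀ z ∈ S, m ≤ ‖P.eval z‖ := by
  have hopen : IsOpen (P.eval '' S)ᶜ := (P.isClosedMap_eval S hS).isOpen_compl
  obtain ⟨m, hm, hball⟩ := Metric.isOpen_iff.mp hopen 0 fun ⟨z, hz, hz0⟩ => hP z hz hz0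
  refine ⟨m, hm, fun z hz => not_lt.mp fun hlt => hball ?_ ⟨z, hz, rfl⟩⟩
  simpa using hlt

theorem Complex.ofReal_add_mul_ne_zero {ε : ℝ} (hε : 0 < ε) {z w : ℂ} (hz : 0 ≤ z.re)
    (hw : 0 < w.re) : (ε : ℂ) + z * w ≠ 0 := by
  intro h
  have hz0 : z ≠ 0 := by rintro rfl; simp at h; linarith
  have hre : ((starRingEnd ℂ) z * (ε + z * w)).re = ε * z.re + Complex.normSq z * w.re := by
    simp only [Complex.mul_re, Complex.add_re, Complex.add_im, Complex.ofReal_re,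
      Complex.ofReal_im, Complex.mul_im, Complex.conj_re, Complex.conj_im, Complex.normSq_apply]
    ring
  rw [h, mul_zero, Complex.zero_re] at hre
  nlinarith [Complex.normSq_pos.mpr hz0]

theorem HurwitzStable.exists_pos_hurwitzStable_C_add_X_mul {f : ℝ[X]} (hf : HurwitzStable f)
    (h0 : 0 < f.coeff 0) : ∃ ε > 0, HurwitzStable (C ε + X * f) := by
  have hre_near : ∀ᶠ z in nhds (0 : ℂ), 0 < (aeval z f).re := by
    refine Filter.Tendsto.eventually_const_lt ?_
      (Complex.continuous_re.comp f.continuous_aeval).continuousAt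
    simpa [← coeff_zero_eq_aeval_zero'] using h0
  obtain ⟨δ, hδ, hnear⟩ := Metric.eventually_nhds_iff.mp hre_near
  have hfar : IsClosed {z : ℂ | 0 ≤ z.re ∧ δ ≤ ‖z‖} :=
    (isClosed_le continuous_const Complex.continuous_re).inter
      (isClosed_le continuous_const continuous_norm)
  obtain ⟨m, hm, hmfar⟩ := (X * f.map (algebraMap ℝ ℂ)).exists_pos_le_norm_eval_of_isClosed hfar
    fun z ⟨hre, hδz⟩ hz => by
      have hz0 : z ≠ 0 := by rintro rfl; simp at hδz; linarith
      have hfz : aeval z f ≠ 0 := fun hfz => (hf z hfz).not_ge hre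
      simp [eval_map_algebraMap, hz0, hfz] at hz
  refine ⟨m / 2, by positivity, fun z hz => not_le.mp fun hre => ?_⟩
  have hroot : ((m / 2 : ℝ) : ℂ) + z * aeval z f = 0 := by simpa using hz
  rcases lt_or_ge ‖z‖ δ with hsmall | hlarge
  · exact Complex.ofReal_add_mul_ne_zero (by positivity) hre (hnear (by simpa using hsmall)) hroot
  · have := hmfar z ⟨hre, hlarge⟩
    rw [eval_mul, eval_X, eval_map_algebraMap, eq_neg_of_add_eq_zero_right hroot, norm_neg,
      Complex.norm_real, Real.norm_of_nonneg (by positivity)] at this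
    linarith

theorem HurwitzStable.exists_pos_prefix {f : ℝ[X]} (hf : HurwitzStable f) (h0 : 0 < f.coeff 0)
    (k : ℕ) : ∃ p : ℕ → ℝ, (∀ i < k, 0 < p i) ∧
      0 < ((∑ i ∈ range k, C (p i) * X ^ i) + X ^ k * f).coeff 0 ∧
      HurwitzStable ((∑ i ∈ range k, C (p i) * X ^ i) + X ^ k * f) := by
  induction k with
  | zero => exact ⟨fun _ => 1, by simp, by simpa using h0, by simpa using hf⟩
  | succ k ih =>
    obtain ⟨p, hp, hF0, hF⟩ := ih
    obtain ⟨ε, hε, hεF⟩ := hF.exists_pos_hurwitzStable_C_add_X_mul hF0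
    have hshift : (∑ i ∈ range (k + 1), C (if i = 0 then ε else p (i - 1)) * X ^ i) +
        X ^ (k + 1) * f = C ε + X * ((∑ i ∈ range k, C (p i) * X ^ i) + X ^ k * f) := by
      have hterm (i : ℕ) : C (p i) * X ^ (i + 1) = X * (C (p i) * X ^ i) := by ring
      simp only [sum_range_succ', mul_add, mul_sum, add_tsub_cancel_right, ← hterm]
      simp only [Nat.add_eq_zero_iff, one_ne_zero, and_false, ↓reduceIte, pow_zero, mul_one]
      ring
    refine ⟨fun i => if i = 0 then ε else p (i - 1), fun i hi => ?_, ?_, ?_⟩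
    · rcases i with _ | i
      · simpa using hε
      · simpa using hp i (by omega)
    · simpa [hshift] using hε
    · rwa [hshift]

theorem stable_prefix_exists_general (n : ℕ) (a : ℕ → ℝ) (ha : ∀ i ≤ n, 0 < a i)
    (hf : HurwitzStable (∑ i ∈ Finset.range (n + 1), Polynomial.C (a i) * Polynomial.X ^ i)) :
    ∀ k : ℕ, 1 ≤ k → ∃ p : ℕ → ℝ,
      (∀ i ≤ k - 1, 0 < p i) ∧
      HurwitzStable ((∑ i ∈ Finset.range k, Polynomial.C (p i) * Polynomial.X ^ i) +
        Polynomial.X ^ k * (∑ i ∈ Finset.range (n + 1), Polynomial.C (a i) * Polynomial.X ^ i)) := by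
  intro k hk
  have h0 : 0 < (∑ i ∈ range (n + 1), C (a i) * X ^ i).coeff 0 := by
    simpa [finsetSum_coeff, coeff_C_mul_X_pow] using ha 0 n.zero_le
  obtain ⟨p, hp, -, hstable⟩ := hf.exists_pos_prefix h0 k
  exact ⟨p, fun i hi => hp i (by omega), hstable⟩

theorem stable_prefix_exists (n : ℕ) (hn : 1 ≤ n) (a : ℕ → ℝ) (ha : ∀ i ≤ n, 0 < a i)
    (hf : HurwitzStable (∑ i ∈ Finset.range (n + 1), Polynomial.C (a i) * Polynomial.X ^ i)) :
    ∀ k : ℕ, 1 ≤ k → ∃ p : ℕ → ℝ,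
      (∀ i ≤ k - 1, 0 < p i) ∧
      HurwitzStable ((∑ i ∈ Finset.range k, Polynomial.C (p i) * Polynomial.X ^ i) +
        Polynomial.X ^ k * (∑ i ∈ Finset.range (n + 1), Polynomial.C (a i) * Polynomial.X ^ i)) :=
  stable_prefix_exists_general n a ha hf
end

section
/- Let f be a Hurwitz stable real polynomial of degree n with positive coefficients and let k ∈ ℕ. Then there exists a sequence (p_m) of polynomials of degree at most k−1 with positive coefficients such that for every m the polynomial s ↦ p_m(s) + s^k f(s) is Hurwitz stable, and p_m → 0 coefficientwise as m → ∞. -/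
open Polynomial Filter


lemma keyA (g : ℝ[X]) (hg : HurwitzStable g) (h0 : 0 < g.coeff 0) :
    ∃ ε₀ > 0, ∀ ε : ℝ, 0 < ε → ε ≤ ε₀ → HurwitzStable (C ε + X * g) := by
  have hgne : g ≠ 0 := fun h => by simp [h] at h0
  -- continuity near 0
  have hcont : Continuous fun z : ℂ => ((aeval z) g).re :=
    (Complex.continuous_re.comp (Polynomial.continuous_aeval g))
  have hU : IsOpen {z : ℂ | 0 < ((aeval z) g).re} :=
    isOpen_lt continuous_const hcont
  have h0mem : (0 : ℂ) ∈ {z : ℂ | 0 < ((aeval z) g).re} := by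
    simp [Polynomial.aeval_def, Polynomial.eval₂_at_zero, h0]
  obtain ⟨δ, hδ, hball⟩ := Metric.isOpen_iff.1 hU 0 h0mem
  -- bound at infinity
  have hXg : X * g ≠ 0 := mul_ne_zero X_ne_zero hgne
  have hdeg : 0 < (X * g).degree := by
    rw [← Polynomial.natDegree_pos_iff_degree_pos,
      Polynomial.natDegree_mul X_ne_zero hgne, Polynomial.natDegree_X]
    omega
  have hlead : algebraMap ℝ ℂ (X * g).leadingCoeff ≠ 0 := by
    have := Polynomial.leadingCoeff_ne_zero.mpr hXg
    simpa using this
  have htend : Tendsto (fun z : ℂ => ‖aeval z (X * g)‖) (Bornology.cobounded ℂ) atTop :=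
    tendsto_abv_aeval_atTop (norm : ℂ → ℝ) (X * g) hdeg hlead tendsto_norm_cobounded_atTop
  have hev : ∀ᶠ z : ℂ in Bornology.cobounded ℂ, 1 ≤ ‖aeval z (X * g)‖ :=
    htend.eventually (eventually_ge_atTop 1)
  obtain ⟨R, -, hR⟩ := (Metric.hasBasis_cobounded_compl_closedBall (0:ℂ)).eventually_iff.mp hev
  -- compact region
  set K : Set ℂ := ({z : ℂ | 0 ≤ z.re} ∩ {z : ℂ | δ ≤ ‖z‖}) ∩ Metric.closedBall 0 (max R δ)
    with hKdef
  have hKcl : IsClosed (({z : ℂ | 0 ≤ z.re} ∩ {z : ℂ | δ ≤ ‖z‖}) : Set ℂ) :=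
    (isClosed_le continuous_const Complex.continuous_re).inter
      (isClosed_le continuous_const continuous_norm)
  have hKcomp : IsCompact K := (isCompact_closedBall (0:ℂ) (max R δ)).inter_left hKcl
  have hKne : K.Nonempty := by
    refine ⟨(δ : ℂ), ⟨⟨?_, ?_⟩, ?_⟩⟩
    · simp [hδ.le]
    · simp [abs_of_pos hδ]
    · simp [mem_closedBall_zero_iff, abs_of_pos hδ, le_max_right]
  obtain ⟨w, hwK, hwmin⟩ := hKcomp.exists_isMinOn hKne
    ((Polynomial.continuous_aeval (R := ℝ) (X * g)).norm.continuousOn)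
  set c : ℝ := ‖aeval w (X * g)‖ with hc
  have hwne : w ≠ 0 := by
    intro h
    have := hwK.1.2
    rw [h] at this
    simp at this
    linarith
  have hgwne : aeval w g ≠ 0 := by
    intro h
    have := hg w h
    have := hwK.1.1
    simp at this
    linarith
  have hcpos : 0 < c := by
    rw [hc]
    have : aeval w (X * g) = w * aeval w g := by simp
    rw [this]
    exact norm_pos_iff.mpr (mul_ne_zero hwne hgwne)
  refine ⟨min c 1 / 2, by positivity, ?_⟩
  intro ε hε hε' z hz
  by_contra hcon
  push_neg at hcon
  have hz' : (ε : ℂ) + aeval z (X * g) = 0 := by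
    simpa using hz
  have heq : aeval z (X * g) = -(ε : ℂ) := by linear_combination hz'
  have hnorm : ‖aeval z (X * g)‖ = ε := by
    rw [heq, norm_neg, Complex.norm_real, Real.norm_of_nonneg hε.le]
  rcases lt_or_ge ‖z‖ δ with h1 | h1
  · -- near zero
    have hre : 0 < ((aeval z) g).re := hball (by simpa [mem_ball_zero_iff] using h1)
    have hgz : aeval z g ≠ 0 := fun h => by simp [h] at hre
    have hmul : z * aeval z g = -(ε : ℂ) := by
      rw [← heq]; simp
    have hzeq : z = -(ε : ℂ) / aeval z g := by
      field_simp [hgz]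
      linear_combination hmul
    have hzre : z.re < 0 := by
      rw [hzeq, Complex.div_re]
      simp only [Complex.neg_re, Complex.neg_im, Complex.ofReal_re, Complex.ofReal_im, neg_zero,
        zero_mul, zero_div, add_zero]
      have hns : 0 < Complex.normSq (aeval z g) := by
        rw [Complex.normSq_pos]
        exact hgz
      have : 0 < ε * ((aeval z) g).re := mul_pos hε hre
      rw [neg_mul]
      rw [neg_div]
      rw [neg_lt_zero]
      positivity
    linarith
  rcases le_or_gt ‖z‖ (max R δ) with h2 | h2
  · -- compact region
    have hzK : z ∈ K := ⟨⟨hcon, h1⟩, by simpa [mem_closedBall_zero_iff] using h2⟩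
    have hcle : c ≤ ε := by
      have h3 : c ≤ ‖(aeval z) (X * g)‖ := hwmin hzK
      rwa [hnorm] at h3
    have : min c 1 / 2 < c := by
      have := min_le_left c 1
      linarith
    linarith
  · -- far away
    have hzmem : z ∈ (Metric.closedBall (0:ℂ) R)ᶜ := by
      simp only [Set.mem_compl_iff, mem_closedBall_zero_iff, not_le]
      exact lt_of_le_of_lt (le_max_left R δ) h2
    have := hR hzmem
    rw [hnorm] at this
    have := min_le_right c 1
    linarith

def shiftc (ε : ℝ) (c : ℕ → ℝ) : ℕ → ℝ
  | 0 => ε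
  | j + 1 => c j

lemma keyB (g : ℝ[X]) (hg : HurwitzStable g) (h0 : 0 < g.coeff 0) :
    ∀ k : ℕ, ∀ δ : ℝ, 0 < δ → ∃ c : ℕ → ℝ,
      (∀ i < k, 0 < c i ∧ c i ≤ δ) ∧
      HurwitzStable ((∑ i ∈ Finset.range k, C (c i) * X ^ i) + X ^ k * g) ∧
      0 < ((∑ i ∈ Finset.range k, C (c i) * X ^ i) + X ^ k * g).coeff 0 := by
  intro k
  induction k with
  | zero =>
    intro δ hδ
    refine ⟨fun _ => δ, fun i hi => absurd hi (Nat.not_lt_zero i), ?_, ?_⟩ <;>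
      simp only [Finset.range_zero, Finset.sum_empty, pow_zero, one_mul, zero_add]
    · exact hg
    · exact h0
  | succ k ih =>
    intro δ hδ
    obtain ⟨c, hc, hstab, hc0⟩ := ih δ hδ
    set q := (∑ i ∈ Finset.range k, C (c i) * X ^ i) + X ^ k * g with hq
    obtain ⟨ε₀, hε₀, hA⟩ := keyA q hstab hc0
    set ε := min δ ε₀ with hε
    have hεpos : 0 < ε := lt_min hδ hε₀
    have hstab' : HurwitzStable (C ε + X * q) := hA ε hεpos (min_le_right _ _)
    have hsum : X * ∑ i ∈ Finset.range k, C (c i) * X ^ i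
        = ∑ i ∈ Finset.range k, C (c i) * X ^ (i + 1) := by
      rw [Finset.mul_sum]; exact Finset.sum_congr rfl (fun i _ => by ring)
    have hpoly : (∑ i ∈ Finset.range (k + 1), C (shiftc ε c i) * X ^ i)
        + X ^ (k + 1) * g = C ε + X * q := by
      rw [Finset.sum_range_succ']
      simp only [shiftc]
      rw [hq, mul_add, hsum]
      ring
    refine ⟨shiftc ε c, ?_, ?_, ?_⟩
    · intro i hi
      cases i with
      | zero => exact ⟨hεpos, min_le_left _ _⟩
      | succ j => exact hc j (by omega)
    · rw [hpoly]; exact hstab'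
    · rw [hpoly]
      simp [Polynomial.mul_coeff_zero, hεpos]

theorem stable_prefix_sequence (n : ℕ) (hn : 1 ≤ n) (a : ℕ → ℝ) (ha : ∀ i ≤ n, 0 < a i)
    (hf : HurwitzStable (∑ i ∈ Finset.range (n + 1), Polynomial.C (a i) * Polynomial.X ^ i))
    (k : ℕ) (hk : 1 ≤ k) :
    ∃ p : ℕ → ℕ → ℝ,
      (∀ m, (∀ i ≤ k - 1, 0 < p m i) ∧
        HurwitzStable ((∑ i ∈ Finset.range k, Polynomial.C (p m i) * Polynomial.X ^ i) +
          Polynomial.X ^ k *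
            (∑ i ∈ Finset.range (n + 1), Polynomial.C (a i) * Polynomial.X ^ i))) ∧
      (∀ i ≤ k - 1, Filter.Tendsto (fun m => p m i) Filter.atTop (nhds 0)) := by
  set f := ∑ i ∈ Finset.range (n + 1), Polynomial.C (a i) * Polynomial.X ^ i with hfdef
  have hf0 : 0 < f.coeff 0 := by
    have : f.coeff 0 = a 0 := by
      rw [hfdef]
      simp [Polynomial.finset_sum_coeff, Polynomial.coeff_C_mul, Polynomial.coeff_X_pow]
    rw [this]
    exact ha 0 (Nat.zero_le n)
  have H : ∀ m : ℕ, ∃ c : ℕ → ℝ,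
      (∀ i < k, 0 < c i ∧ c i ≤ 1 / ((m : ℝ) + 1)) ∧
      HurwitzStable ((∑ i ∈ Finset.range k, C (c i) * X ^ i) + X ^ k * f) ∧
      0 < ((∑ i ∈ Finset.range k, C (c i) * X ^ i) + X ^ k * f).coeff 0 :=
    fun m => keyB f hf hf0 k (1 / ((m : ℝ) + 1)) (by positivity)
  choose p hp using H
  refine ⟨p, fun m => ⟨?_, (hp m).2.1⟩, ?_⟩
  · intro i hi
    exact ((hp m).1 i (by omega)).1
  · intro i hi
    have hik : i < k := by omega
    apply squeeze_zero (fun m => ((hp m).1 i hik).1.le) (fun m => ((hp m).1 i hik).2)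
    exact tendsto_one_div_add_atTop_nhds_zero_nat
end

section
/- Let 1 ≤ m ≤ 4 and m ≤ n. Let f(s) = Σ_{i=0}^n a_i s^i have positive coefficients with a_{i−2} a_{i+1} < a_i a_{i−1} for i = 2, ..., n−1 (if n ≥ 3), and let g(s) = Σ_{i=0}^m b_i s^i be Hurwitz stable with positive coefficients. Then for every j ∈ {0, ..., n−m} the polynomial F_j(s) = Σ_{i=0}^m a_{j+i} b_i s^i is Hurwitz stable. -/
open Polynomial Complex Finset

noncomputable def polyOfCoeffs (m : ℕ) (c : ℕ → ℝ) : ℝ[X] :=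
  ∑ i ∈ range (m + 1), C (c i) * X ^ i

theorem hurwitzStable_mul_iff {p q : ℝ[X]} :
    HurwitzStable (p * q) ↔ HurwitzStable p ∧ HurwitzStable q := by
  simp only [HurwitzStable, map_mul, mul_eq_zero]
  exact ⟨fun h => ⟨fun z hz => h z (.inl hz), fun z hz => h z (.inr hz)⟩,
    fun h z hz => hz.elim (h.1 z) (h.2 z)⟩

theorem hurwitzStable_C_mul_iff {a : ℝ} (ha : a ≠ 0) {p : ℝ[X]} :
    HurwitzStable (C a * p) ↔ HurwitzStable p := by
  simp [HurwitzStable, ha]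

theorem hurwitzStable_linear_iff {a b : ℝ} (ha : 0 < a) :
    HurwitzStable (C a * X + C b) ↔ 0 < b := by
  simp only [HurwitzStable, map_add, map_mul, aeval_C, aeval_X, coe_algebraMap]
  refine ⟨fun h => ?_, fun hb z hz => ?_⟩
  · have := h (-b / a : ℝ) (by rw [ofReal_div, mul_div_cancel₀ _ (ofReal_ne_zero.2 ha.ne')]; simp)
    rwa [ofReal_re, neg_div, neg_lt_zero, div_pos_iff_of_pos_right ha] at this
  · have hre := congrArg re hz
    simp only [add_re, mul_re, ofReal_re, ofReal_im, zero_mul, sub_zero, zero_re] at hre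
    nlinarith

theorem aeval_quadratic (a b c : ℝ) (z : ℂ) :
    aeval z (C a * X ^ 2 + C b * X + C c) = a * (z * z) + b * z + c := by
  simp [sq]

theorem pos_of_hurwitzStable_quadratic {a b c : ℝ} (ha : 0 < a)
    (h : HurwitzStable (C a * X ^ 2 + C b * X + C c)) : 0 < b ∧ 0 < c := by
  simp only [HurwitzStable, aeval_quadratic] at h
  by_contra hneg
  rcases le_or_gt 0 (discrim a b c) with hd | hd
  · set r := (-b + √(discrim a b c)) / (2 * a)
    have hr : a * (r * r) + b * r + c = 0 :=
      (quadratic_eq_zero_iff ha.ne' (Real.mul_self_sqrt hd).symm r).2 (.inl rfl)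
    have hr0 : 0 ≤ r := by
      apply div_nonneg _ (by positivity)
      rcases not_and_or.1 hneg with hb | hc
      · linarith [Real.sqrt_nonneg (discrim a b c)]
      · have : |b| ≤ √(discrim a b c) := Real.abs_le_sqrt (by rw [discrim]; nlinarith)
        linarith [le_abs_self b]
    have := h r (by exact_mod_cast hr)
    rw [ofReal_re] at this
    linarith
  · set w : ℂ := (-b + I * √(-discrim a b c)) / (2 * a)
    have hs : discrim (a : ℂ) b c = (I * √(-discrim a b c)) * (I * √(-discrim a b c)) := by
      rw [mul_mul_mul_comm, I_mul_I, ← ofReal_mul, Real.mul_self_sqrt (by linarith)]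
      simp [discrim]
    have hw := (quadratic_eq_zero_iff (by exact_mod_cast ha.ne') hs w).2 (.inl rfl)
    have hre : w.re = -b / (2 * a) := by
      simp only [w]
      rw [show (2 : ℂ) * a = ((2 * a : ℝ) : ℂ) by push_cast; rfl, div_ofReal_re]
      simp
    have hb : b ≤ 0 := by
      rcases not_and_or.1 hneg with hb | hc
      · linarith
      · rw [discrim] at hd; nlinarith [sq_nonneg b]
    have := h w hw
    rw [hre] at this
    have : 0 ≤ -b / (2 * a) := div_nonneg (by linarith) (by positivity)
    linarith

theorem hurwitzStable_quadratic {a b c : ℝ} (ha : 0 < a) (hb : 0 < b) (hc : 0 < c) :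
    HurwitzStable (C a * X ^ 2 + C b * X + C c) := by
  intro z hz
  rw [aeval_quadratic] at hz
  have hre := congrArg re hz
  have him := congrArg im hz
  simp only [add_re, add_im, mul_re, mul_im, ofReal_re, ofReal_im, zero_re, zero_im, zero_mul,
    sub_zero, add_zero] at hre him
  by_contra hx
  push Not at hx
  -- real part of the equation multiplied by the conjugate of z
  have key : (a * (z.re ^ 2 + z.im ^ 2) + c) * z.re + b * (z.re ^ 2 + z.im ^ 2) = 0 := by
    linear_combination z.re * hre + z.im * him
  have h1 : 0 ≤ (a * (z.re ^ 2 + z.im ^ 2) + c) * z.re := mul_nonneg (by positivity) hx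
  have h2 : z.re ^ 2 + z.im ^ 2 = 0 := by nlinarith [sq_nonneg z.re, sq_nonneg z.im]
  nlinarith [sq_nonneg z.re, sq_nonneg z.im]

theorem hurwitzStable_quadratic_iff {a b c : ℝ} (ha : 0 < a) :
    HurwitzStable (C a * X ^ 2 + C b * X + C c) ↔ 0 < b ∧ 0 < c :=
  ⟨pos_of_hurwitzStable_quadratic ha, fun ⟨hb, hc⟩ => hurwitzStable_quadratic ha hb hc⟩

theorem hurwitzStable_X_add_C_iff {r : ℝ} : HurwitzStable (X + C r) ↔ 0 < r := by
  simpa using hurwitzStable_linear_iff (b := r) one_pos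

theorem hurwitzStable_monic_quadratic_iff {s t : ℝ} :
    HurwitzStable (X ^ 2 + C s * X + C t) ↔ 0 < s ∧ 0 < t := by
  simpa using hurwitzStable_quadratic_iff (b := s) (c := t) one_pos

theorem isMonicOfDegree_C_inv_mul_polyOfCoeffs {m : ℕ} {c : ℕ → ℝ} (hm : c m ≠ 0) :
    (C (c m)⁻¹ * polyOfCoeffs m c).IsMonicOfDegree m := by
  refine (isMonicOfDegree_iff _ _).2 ⟨(natDegree_C_mul_le _ _).trans ?_, ?_⟩
  · exact natDegree_sum_le_of_forall_le _ _ fun i hi =>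
      (natDegree_C_mul_X_pow_le _ _).trans (Nat.lt_succ_iff.1 (mem_range.1 hi))
  · simp [polyOfCoeffs, hm]

theorem exists_polyOfCoeffs_eq_quadratic_mul {n : ℕ} {c : ℕ → ℝ} (hn : c (n + 2) ≠ 0) :
    ∃ s t : ℝ, ∃ g : ℝ[X], g.IsMonicOfDegree n ∧
      polyOfCoeffs (n + 2) c = (X ^ 2 + C s * X + C t) * (C (c (n + 2)) * g) := by
  obtain ⟨f, g, hf, hg, hfg⟩ :=
    (isMonicOfDegree_C_inv_mul_polyOfCoeffs hn).eq_isMonicOfDegree_two_mul_isMonicOfDegree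
  obtain ⟨s, t, rfl⟩ := isMonicOfDegree_two_iff.1 hf
  refine ⟨s, t, g, hg, ?_⟩
  calc polyOfCoeffs (n + 2) c = C (c (n + 2)) * (C (c (n + 2))⁻¹ * polyOfCoeffs (n + 2) c) := by
        rw [← mul_assoc, ← C_mul, mul_inv_cancel₀ hn, C_1, one_mul]
    _ = _ := by rw [hfg]; ring

theorem polyOfCoeffs_one (c : ℕ → ℝ) : polyOfCoeffs 1 c = C (c 1) * X + C (c 0) := by
  simp [polyOfCoeffs, sum_range_succ, add_comm]

theorem polyOfCoeffs_two (c : ℕ → ℝ) :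
    polyOfCoeffs 2 c = C (c 2) * X ^ 2 + C (c 1) * X + C (c 0) := by
  simp only [polyOfCoeffs, sum_range_succ, sum_range_zero]
  ring

theorem hurwitzStable_polyOfCoeffs_three_iff {c : ℕ → ℝ} (hc : ∀ i ≤ 3, 0 < c i) :
    HurwitzStable (polyOfCoeffs 3 c) ↔ c 0 * c 3 < c 1 * c 2 := by
  obtain ⟨s, t, g, hg, hp⟩ := exists_polyOfCoeffs_eq_quadratic_mul (n := 1) (hc 3 le_rfl).ne'
  obtain ⟨r, rfl⟩ := isMonicOfDegree_one_iff.1 hg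
  simp only [Nat.reduceAdd] at hp
  obtain ⟨h0, h1, h2⟩ : c 0 = t * (c 3 * r) ∧ c 1 = t * c 3 + s * (c 3 * r) ∧
      c 2 = s * c 3 + c 3 * r := by
    have hcoeff (k : ℕ) := congrArg (coeff · k) hp
    simpa [polyOfCoeffs, coeff_mul, Finset.Nat.antidiagonal_succ, coeff_X] using
      And.intro (hcoeff 0) (And.intro (hcoeff 1) (hcoeff 2))
  have hc3 := hc 3 le_rfl
  have htr : 0 < t * r := by nlinarith [hc 0 (by norm_num)]
  have hsrt : 0 < s * r + t := by nlinarith [hc 1 (by norm_num)]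
  have hrs : 0 < r + s := by nlinarith [hc 2 (by norm_num)]
  have hΔ : c 1 * c 2 - c 0 * c 3 = c 3 ^ 2 * s * (r * (r + s) + t) := by
    rw [h0, h1, h2]; ring
  rw [hp, hurwitzStable_mul_iff, hurwitzStable_C_mul_iff hc3.ne', hurwitzStable_monic_quadratic_iff,
    hurwitzStable_X_add_C_iff, ← sub_pos (a := c 1 * c 2), hΔ]
  constructor
  · rintro ⟨⟨hs, ht⟩, hr⟩
    positivity
  · intro hΔpos
    obtain ⟨ht, hr⟩ : 0 < t ∧ 0 < r := by
      refine (pos_and_pos_or_neg_and_neg_of_mul_pos htr).resolve_right fun ⟨ht, hr⟩ => ?_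
      nlinarith
    have hq : 0 < r * (r + s) + t := by positivity
    exact ⟨⟨(mul_pos_iff_of_pos_left (pow_pos hc3 2)).1 ((mul_pos_iff_of_pos_right hq).1 hΔpos),
      ht⟩, hr⟩

theorem hurwitzStable_polyOfCoeffs_four_iff {c : ℕ → ℝ} (hc : ∀ i ≤ 4, 0 < c i) :
    HurwitzStable (polyOfCoeffs 4 c) ↔ c 0 * c 3 ^ 2 + c 1 ^ 2 * c 4 < c 1 * c 2 * c 3 := by
  obtain ⟨s, t, g, hg, hp⟩ := exists_polyOfCoeffs_eq_quadratic_mul (n := 2) (hc 4 le_rfl).ne'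
  obtain ⟨u, v, rfl⟩ := isMonicOfDegree_two_iff.1 hg
  simp only [Nat.reduceAdd] at hp
  obtain ⟨h0, h1, h2, h3⟩ : c 0 = t * (c 4 * v) ∧ c 1 = t * (c 4 * u) + s * (c 4 * v) ∧
      c 2 = t * c 4 + (s * (c 4 * u) + c 4 * v) ∧ c 3 = s * c 4 + c 4 * u := by
    have hcoeff (k : ℕ) := congrArg (coeff · k) hp
    simpa [polyOfCoeffs, coeff_mul, Finset.Nat.antidiagonal_succ, coeff_X, coeff_X_pow] using
      And.intro (hcoeff 0) (And.intro (hcoeff 1) (And.intro (hcoeff 2) (hcoeff 3)))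
  have hc4 := hc 4 le_rfl
  have htv : 0 < t * v := by nlinarith [hc 0 (by norm_num)]
  have hsvtu : 0 < s * v + t * u := by nlinarith [hc 1 (by norm_num)]
  have hus : 0 < u + s := by nlinarith [hc 3 (by norm_num)]
  have hΔ : c 1 * c 2 * c 3 - (c 0 * c 3 ^ 2 + c 1 ^ 2 * c 4) =
      c 4 ^ 3 * (s * u) * ((v - t) ^ 2 + (u + s) * (s * v + t * u)) := by
    rw [h0, h1, h2, h3]; ring
  rw [hp, hurwitzStable_mul_iff, hurwitzStable_C_mul_iff hc4.ne', hurwitzStable_monic_quadratic_iff,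
    hurwitzStable_monic_quadratic_iff, ← sub_pos (a := c 1 * c 2 * c 3), hΔ]
  constructor
  · rintro ⟨⟨hs, ht⟩, hu, hv⟩
    positivity
  · intro hΔpos
    have hq : 0 < (v - t) ^ 2 + (u + s) * (s * v + t * u) := by positivity
    have hsu := (mul_pos_iff_of_pos_left (pow_pos hc4 3)).1 ((mul_pos_iff_of_pos_right hq).1 hΔpos)
    obtain ⟨hs, hu⟩ : 0 < s ∧ 0 < u := by
      refine (pos_and_pos_or_neg_and_neg_of_mul_pos hsu).resolve_right fun ⟨hs, hu⟩ => ?_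
      linarith
    obtain ⟨ht, hv⟩ : 0 < t ∧ 0 < v := by
      refine (pos_and_pos_or_neg_and_neg_of_mul_pos htv).resolve_right fun ⟨ht, hv⟩ => ?_
      nlinarith
    exact ⟨⟨hs, ht⟩, hu, hv⟩

theorem hadamard_cubic_hurwitz_ineq {a b : ℕ → ℝ} (ha : ∀ i ≤ 3, 0 < a i)
    (hb : ∀ i ≤ 3, 0 < b i) (ha' : a 0 * a 3 < a 2 * a 1) (hb' : b 0 * b 3 < b 1 * b 2) :
    a 0 * b 0 * (a 3 * b 3) < a 1 * b 1 * (a 2 * b 2) := by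
  have := mul_lt_mul'' ha' hb' (mul_pos (ha 0 (by norm_num)) (ha 3 le_rfl)).le
    (mul_pos (hb 0 (by norm_num)) (hb 3 le_rfl)).le
  linarith

theorem hadamard_quartic_hurwitz_ineq {a b : ℕ → ℝ} (ha : ∀ i ≤ 4, 0 < a i)
    (hb : ∀ i ≤ 4, 0 < b i) (ha₁ : a 0 * a 3 < a 2 * a 1) (ha₂ : a 1 * a 4 < a 3 * a 2)
    (hb' : b 0 * b 3 ^ 2 + b 1 ^ 2 * b 4 < b 1 * b 2 * b 3) :
    a 0 * b 0 * (a 3 * b 3) ^ 2 + (a 1 * b 1) ^ 2 * (a 4 * b 4) <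
      a 1 * b 1 * (a 2 * b 2) * (a 3 * b 3) := by
  have ha1 := ha 1 (by norm_num)
  have ha3 := ha 3 (by norm_num)
  have hA : 0 < a 1 * a 2 * a 3 := by have := ha 2 (by norm_num); positivity
  have hB₀ : 0 < b 0 * b 3 ^ 2 := by
    have := hb 0 (by norm_num); have := hb 3 (by norm_num); positivity
  have hB₁ : 0 < b 1 ^ 2 * b 4 := by have := hb 1 (by norm_num); have := hb 4 le_rfl; positivity
  calc _ = a 0 * a 3 * a 3 * (b 0 * b 3 ^ 2) + a 1 * a 4 * a 1 * (b 1 ^ 2 * b 4) := by ring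
    _ < a 2 * a 1 * a 3 * (b 0 * b 3 ^ 2) + a 3 * a 2 * a 1 * (b 1 ^ 2 * b 4) := by gcongr
    _ = a 1 * a 2 * a 3 * (b 0 * b 3 ^ 2 + b 1 ^ 2 * b 4) := by ring
    _ < a 1 * a 2 * a 3 * (b 1 * b 2 * b 3) := by gcongr
    _ = _ := by ring

theorem gen_hadamard_stable_small_degree (n m : ℕ) (hm1 : 1 ≤ m) (hm4 : m ≤ 4) (hmn : m ≤ n)
    (a b : ℕ → ℝ) (ha : ∀ i ≤ n, 0 < a i)
    (hW : ∀ i, 2 ≤ i → i ≤ n - 1 → a (i - 2) * a (i + 1) < a i * a (i - 1))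
    (hb : ∀ i ≤ m, 0 < b i)
    (hg : HurwitzStable (∑ i ∈ Finset.range (m + 1), Polynomial.C (b i) * Polynomial.X ^ i)) :
    ∀ j ≤ n - m,
      HurwitzStable
        (∑ i ∈ Finset.range (m + 1), Polynomial.C (a (j + i) * b i) * Polynomial.X ^ i) := by
  intro j hj
  have hW' : ∀ k, k + 3 ≤ n → a k * a (k + 3) < a (k + 2) * a (k + 1) := fun k hk => by
    simpa using hW (k + 2) (by omega) (by omega)
  have haj : ∀ i ≤ m, 0 < a (j + i) := fun i hi => ha _ (by omega)
  have hc : ∀ i ≤ m, 0 < a (j + i) * b i := fun i hi => mul_pos (haj i hi) (hb i hi)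
  change HurwitzStable (polyOfCoeffs m b) at hg
  change HurwitzStable (polyOfCoeffs m fun i => a (j + i) * b i)
  interval_cases m
  · rw [polyOfCoeffs_one]
    exact (hurwitzStable_linear_iff (hc 1 le_rfl)).2 (hc 0 (by norm_num))
  · rw [polyOfCoeffs_two]
    exact hurwitzStable_quadratic (hc 2 le_rfl) (hc 1 (by norm_num)) (hc 0 (by norm_num))
  · exact (hurwitzStable_polyOfCoeffs_three_iff hc).2 <| hadamard_cubic_hurwitz_ineq haj hb
      (hW' j (by omega)) ((hurwitzStable_polyOfCoeffs_three_iff hb).1 hg)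
  · exact (hurwitzStable_polyOfCoeffs_four_iff hc).2 <| hadamard_quartic_hurwitz_ineq haj hb
      (hW' j (by omega)) (hW' (j + 1) (by omega)) ((hurwitzStable_polyOfCoeffs_four_iff hb).1 hg)
end

section
/- Let g(s) = b_0 + b_1 s + b_2 s^2 + b_3 s^3 + b_4 s^4 be a Hurwitz stable real polynomial with positive coefficients, and let a_j, a_{j+1}, a_{j+2}, a_{j+3}, a_{j+4} be positive reals satisfying a_{j} a_{j+3} < a_{j+1} a_{j+2} and a_{j+1} a_{j+4} < a_{j+2} a_{j+3}. Then the polynomial F(s) = a_j b_0 + a_{j+1} b_1 s + a_{j+2} b_2 s^2 + a_{j+3} b_3 s^3 + a_{j+4} b_4 s^4 is Hurwitz stable. -/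
open Polynomial

lemma routh_quartic_stable {c0 c1 c2 c3 c4 : ℝ}
    (h0 : 0 < c0) (h1 : 0 < c1) (h2 : 0 < c2) (h3 : 0 < c3) (h4 : 0 < c4)
    (hA : c1 * c4 < c2 * c3) (hB : c0 * c3 ^ 2 + c1 ^ 2 * c4 < c1 * c2 * c3) :
    HurwitzStable (C c0 + C c1 * X + C c2 * X ^ 2 + C c3 * X ^ 3 + C c4 * X ^ 4) := by
  intro z hz
  simp only [map_add, map_mul, map_pow, aeval_C, aeval_X, Complex.coe_algebraMap] at hz
  by_contra hcon
  push_neg at hcon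
  set x := z.re with hx
  set y := z.im with hy
  have hRe := congrArg Complex.re hz
  have hIm := congrArg Complex.im hz
  simp only [pow_succ, pow_zero, one_mul, Complex.add_re, Complex.add_im, Complex.mul_re,
    Complex.mul_im, Complex.ofReal_re, Complex.ofReal_im, Complex.zero_re, Complex.zero_im,
    ← hx, ← hy] at hRe hIm
  -- key consequence of Routh: c2^2 > 4*c0*c4
  have hc2 : 4 * c0 * c4 < c2 ^ 2 := by
    nlinarith [sq_nonneg (c2 * c3 - 2 * c1 * c4), mul_pos h3 h3,
      mul_lt_mul_of_pos_left hB (show (0:ℝ) < 4 * c4 by positivity)]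
  by_cases hy0 : y = 0
  · rw [hy0] at hRe
    have hfx : c0 + c1 * x + c2 * x ^ 2 + c3 * x ^ 3 + c4 * x ^ 4 = 0 := by
      linear_combination hRe
    nlinarith [mul_nonneg h1.le hcon, mul_nonneg h2.le (sq_nonneg x),
      mul_nonneg h3.le (pow_nonneg hcon 3), mul_nonneg h4.le (pow_nonneg hcon 4),
      pow_nonneg hcon 3, pow_nonneg hcon 4, sq_nonneg x]
  · have hIm' : y * (c1 + 2 * c2 * x + 3 * c3 * x ^ 2 + 4 * c4 * x ^ 3
        - (c3 + 4 * c4 * x) * y ^ 2) = 0 := by linear_combination hIm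
    have key : (c3 + 4 * c4 * x) * y ^ 2
        = c1 + 2 * c2 * x + 3 * c3 * x ^ 2 + 4 * c4 * x ^ 3 := by
      rcases mul_eq_zero.1 hIm' with h | h
      · exact absurd h hy0
      · linarith
    have hErel : c0 + c1 * x + c2 * (x ^ 2 - y ^ 2) + c3 * (x ^ 3 - 3 * x * y ^ 2)
        + c4 * (x ^ 4 - 6 * x ^ 2 * y ^ 2 + y ^ 4) = 0 := by linear_combination hRe
    have hP : (c0 * c3 ^ 2 + c1 ^ 2 * c4 - c1 * c2 * c3)
        - x * (2 * c3 * (c2 ^ 2 + c1 * c3 - 4 * c0 * c4))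
        - x ^ 2 * (8 * c2 * c3 ^ 2 + 4 * c1 * c3 * c4 + 4 * c4 * (c2 ^ 2 - 4 * c0 * c4))
        - x ^ 3 * (8 * c3 ^ 3 + 32 * c2 * c3 * c4)
        - x ^ 4 * (48 * c3 ^ 2 * c4 + 32 * c2 * c4 ^ 2)
        - x ^ 5 * (96 * c3 * c4 ^ 2)
        - x ^ 6 * (64 * c4 ^ 3) = 0 := by
      linear_combination ((c3 + 4 * c4 * x) ^ 2) * hErel
        + ((c2 + 3 * c3 * x + 6 * c4 * x ^ 2) * (c3 + 4 * c4 * x)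
          - c4 * ((c3 + 4 * c4 * x) * y ^ 2
            + (c1 + 2 * c2 * x + 3 * c3 * x ^ 2 + 4 * c4 * x ^ 3))) * key
    have t1 : 0 ≤ x * (2 * c3 * (c2 ^ 2 + c1 * c3 - 4 * c0 * c4)) := by
      apply mul_nonneg hcon
      have := mul_pos h1 h3
      nlinarith [mul_pos h1 h3, mul_nonneg h3.le (by linarith : (0:ℝ) ≤ c2 ^ 2 + c1 * c3 - 4 * c0 * c4)]
    have t2 : 0 ≤ x ^ 2 * (8 * c2 * c3 ^ 2 + 4 * c1 * c3 * c4 + 4 * c4 * (c2 ^ 2 - 4 * c0 * c4)) := by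
      apply mul_nonneg (sq_nonneg x)
      have e1 := mul_pos h2 (mul_pos h3 h3)
      have e2 := mul_pos h1 (mul_pos h3 h4)
      have e3 : 0 ≤ c4 * (c2 ^ 2 - 4 * c0 * c4) := mul_nonneg h4.le (by linarith)
      linarith
    have t3 : 0 ≤ x ^ 3 * (8 * c3 ^ 3 + 32 * c2 * c3 * c4) := by
      apply mul_nonneg (pow_nonneg hcon 3); positivity
    have t4 : 0 ≤ x ^ 4 * (48 * c3 ^ 2 * c4 + 32 * c2 * c4 ^ 2) := by
      apply mul_nonneg (pow_nonneg hcon 4); positivity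
    have t5 : 0 ≤ x ^ 5 * (96 * c3 * c4 ^ 2) := by
      apply mul_nonneg (pow_nonneg hcon 5); positivity
    have t6 : 0 ≤ x ^ 6 * (64 * c4 ^ 3) := by
      apply mul_nonneg (pow_nonneg hcon 6); positivity
    linarith

lemma quartic_coeff_eq {u0 u1 u2 u3 u4 v0 v1 v2 v3 v4 : ℝ}
    (h : C u0 + C u1 * X + C u2 * X ^ 2 + C u3 * X ^ 3 + C u4 * X ^ 4
       = C v0 + C v1 * X + C v2 * X ^ 2 + C v3 * X ^ 3 + C v4 * X ^ 4) :
    u0 = v0 ∧ u1 = v1 ∧ u2 = v2 ∧ u3 = v3 ∧ u4 = v4 := by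
  refine ⟨?_, ?_, ?_, ?_, ?_⟩
  · simpa using congrArg (fun f => coeff f 0) h
  · simpa using congrArg (fun f => coeff f 1) h
  · simpa using congrArg (fun f => coeff f 2) h
  · simpa using congrArg (fun f => coeff f 3) h
  · simpa using congrArg (fun f => coeff f 4) h

lemma eq_quadratic_of_natDegree_le_two {h : ℝ[X]} (hd : h.natDegree ≤ 2) :
    h = C (h.coeff 2) * X ^ 2 + C (h.coeff 1) * X + C (h.coeff 0) := by
  ext n
  rcases n with _ | _ | _ | n
  · simp
  · simp
  · simp
  · rw [coeff_eq_zero_of_natDegree_lt (by omega)]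
    simp [coeff_X, coeff_C]

lemma quadratic_pos_of_stable {p q : ℝ}
    (h : ∀ z : ℂ, z ^ 2 + (p : ℂ) * z + (q : ℂ) = 0 → z.re < 0) : 0 < p ∧ 0 < q := by
  obtain ⟨z1, hz1⟩ : ∃ z : ℂ, z ^ 2 + (p : ℂ) * z + (q : ℂ) = 0 := by
    obtain ⟨z, hz⟩ := Complex.exists_root (f := X ^ 2 + C (p : ℂ) * X + C (q : ℂ))
      (by
        have hdeg : (X ^ 2 + C (p:ℂ) * X + C (q:ℂ)).degree = 2 := by compute_degree!
        rw [hdeg]; norm_num)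
    exact ⟨z, by simpa [IsRoot] using hz⟩
  set z2 : ℂ := -(p:ℂ) - z1 with hz2def
  have hz2 : z2 ^ 2 + (p:ℂ) * z2 + (q:ℂ) = 0 := by rw [hz2def]; linear_combination hz1
  have h1 := h z1 hz1
  have h2 := h z2 hz2
  have h2re : z2.re = -p - z1.re := by simp [hz2def]
  have h2im : z2.im = -z1.im := by simp [hz2def]
  have hq : (q:ℂ) = z1 * z2 := by linear_combination hz1
  have hqre : q = z1.re * z2.re - z1.im * z2.im := by
    have := congrArg Complex.re hq
    simpa [Complex.mul_re] using this
  constructor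
  · rw [h2re] at h2; linarith
  · rw [h2im] at hqre
    nlinarith [mul_pos (neg_pos.2 h1) (neg_pos.2 h2), sq_nonneg z1.im]

lemma quartic_factor {b0 b1 b2 b3 b4 : ℝ} (hb4 : 0 < b4)
    (hg : HurwitzStable (C b0 + C b1 * X + C b2 * X ^ 2 + C b3 * X ^ 3 + C b4 * X ^ 4)) :
    ∃ p q r s : ℝ, 0 < p ∧ 0 < q ∧ 0 < r ∧ 0 < s ∧
      b0 = b4 * (q * s) ∧ b1 = b4 * (p * s + q * r) ∧ b2 = b4 * (q + s + p * r) ∧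
      b3 = b4 * (p + r) := by
  set g : ℝ[X] := C b0 + C b1 * X + C b2 * X ^ 2 + C b3 * X ^ 3 + C b4 * X ^ 4 with hgdef
  have hgd : g.natDegree = 4 := by
    rw [hgdef]; compute_degree!
    exact hb4.ne'
  have hg0 : g ≠ 0 := fun h => by simp [h] at hgd
  have hglc : g.coeff 4 = b4 := by rw [hgdef]; simp [coeff_X, coeff_C]
  -- real roots are negative
  have hreal : ∀ x : ℝ, IsRoot g x → x < 0 := by
    intro x hx
    have h1 : aeval (x : ℂ) g = 0 := by
      rw [show ((x:ℂ)) = algebraMap ℝ ℂ x from rfl, aeval_algebraMap_apply]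
      simp [hx.eq_zero]
    simpa using hg _ h1
  -- step: a degree ≤ 2 divisor with leading coeff b4 factors as b4 * stable monic quadratic
  have stepQuad : ∀ w k : ℝ[X], g = w * k → k.natDegree ≤ 2 → k.coeff 2 = b4 →
      ∃ r s : ℝ, 0 < r ∧ 0 < s ∧ k = C b4 * (X ^ 2 + C r * X + C s) := by
    intro w k hfac hkd hkc
    have hk2 := eq_quadratic_of_natDegree_le_two hkd
    rw [hkc] at hk2
    set c1 := k.coeff 1 with hc1
    set c0 := k.coeff 0 with hc0
    refine ⟨c1 / b4, c0 / b4, ?_⟩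
    have e1 : (C c1 : ℝ[X]) = C b4 * C (c1 / b4) := by
      rw [← C_mul]; congr 1; field_simp
    have e0 : (C c0 : ℝ[X]) = C b4 * C (c0 / b4) := by
      rw [← C_mul]; congr 1; field_simp
    have hkform : k = C b4 * (X ^ 2 + C (c1 / b4) * X + C (c0 / b4)) := by
      rw [hk2, e1, e0]; ring
    have hstab : ∀ z : ℂ, z ^ 2 + ((c1 / b4 : ℝ) : ℂ) * z + ((c0 / b4 : ℝ) : ℂ) = 0
        → z.re < 0 := by
      intro z hz
      apply hg z
      rw [hfac, map_mul]
      have : (aeval z) k = 0 := by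
        rw [hkform]
        simp only [map_mul, map_add, map_pow, aeval_C, aeval_X, Complex.coe_algebraMap]
        rw [hz]; ring
      rw [this, mul_zero]
    obtain ⟨h1, h2⟩ := quadratic_pos_of_stable hstab
    exact ⟨h1, h2, hkform⟩
  -- final: from a factorization into two positive quadratics, conclude
  have final : ∀ p q r s : ℝ, 0 < p → 0 < q → 0 < r → 0 < s →
      g = C b4 * ((X ^ 2 + C p * X + C q) * (X ^ 2 + C r * X + C s)) →
      ∃ p q r s : ℝ, 0 < p ∧ 0 < q ∧ 0 < r ∧ 0 < s ∧
        b0 = b4 * (q * s) ∧ b1 = b4 * (p * s + q * r) ∧ b2 = b4 * (q + s + p * r) ∧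
        b3 = b4 * (p + r) := by
    intro p q r s hp hq hr hs hfac
    have hexp : C b4 * ((X ^ 2 + C p * X + C q) * (X ^ 2 + C r * X + C s))
        = C (b4 * (q * s)) + C (b4 * (p * s + q * r)) * X + C (b4 * (q + s + p * r)) * X ^ 2
          + C (b4 * (p + r)) * X ^ 3 + C b4 * X ^ 4 := by
      simp only [C_mul, C_add]
      ring
    rw [hgdef] at hfac
    obtain ⟨e0, e1, e2, e3, _⟩ := quartic_coeff_eq (hfac.trans hexp)
    exact ⟨p, q, r, s, hp, hq, hr, hs, e0, e1, e2, e3⟩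
  -- get a complex root
  obtain ⟨z1, hz1⟩ : ∃ z : ℂ, aeval z g = 0 :=
    IsAlgClosed.exists_aeval_eq_zero ℂ g
      (by rw [degree_eq_natDegree hg0, hgd]; exact (by norm_num : ((4:ℕ):WithBot ℕ) ≠ 0))
  by_cases h1im : z1.im = 0
  · -- real root x1
    have hx1eq : ((z1.re : ℂ)) = z1 := Complex.ext rfl (by simp [h1im])
    have hx1 : IsRoot g z1.re := by
      have h1 : aeval ((z1.re : ℂ)) g = 0 := by rw [hx1eq]; exact hz1
      rw [show ((z1.re:ℂ)) = algebraMap ℝ ℂ z1.re from rfl, aeval_algebraMap_apply] at h1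
      simpa using h1
    set x1 := z1.re with hx1def
    have hx1neg : x1 < 0 := hreal x1 hx1
    obtain ⟨h3, hfac3⟩ := dvd_iff_isRoot.2 hx1
    have h30 : h3 ≠ 0 := fun h => by rw [h, mul_zero] at hfac3; exact hg0 hfac3
    have h3d : h3.natDegree = 3 := by
      have := natDegree_mul (X_sub_C_ne_zero x1) h30
      rw [← hfac3, hgd, natDegree_X_sub_C] at this
      omega
    obtain ⟨z2, hz2⟩ : ∃ z : ℂ, aeval z h3 = 0 :=
      IsAlgClosed.exists_aeval_eq_zero ℂ h3
        (by rw [degree_eq_natDegree h30, h3d]; exact (by norm_num : ((3:ℕ):WithBot ℕ) ≠ 0))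
    have hz2g : aeval z2 g = 0 := by rw [hfac3, map_mul, hz2, mul_zero]
    by_cases h2im : z2.im = 0
    · -- second real root x2
      have hx2eq : ((z2.re : ℂ)) = z2 := Complex.ext rfl (by simp [h2im])
      have hx2 : IsRoot h3 z2.re := by
        have h1 : aeval ((z2.re : ℂ)) h3 = 0 := by rw [hx2eq]; exact hz2
        rw [show ((z2.re:ℂ)) = algebraMap ℝ ℂ z2.re from rfl, aeval_algebraMap_apply] at h1
        simpa using h1
      set x2 := z2.re with hx2def
      have hx2g : IsRoot g x2 := by
        rw [hfac3]; simp [IsRoot, hx2.eq_zero]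
      have hx2neg : x2 < 0 := hreal x2 hx2g
      obtain ⟨h2, hfac2⟩ := dvd_iff_isRoot.2 hx2
      have h20 : h2 ≠ 0 := fun h => by rw [h, mul_zero] at hfac2; exact h30 hfac2
      have h2d : h2.natDegree = 2 := by
        have := natDegree_mul (X_sub_C_ne_zero x2) h20
        rw [← hfac2, h3d, natDegree_X_sub_C] at this
        omega
      have hfacg : g = ((X - C x1) * (X - C x2)) * h2 := by
        rw [hfac3, hfac2]; ring
      have h2c : h2.coeff 2 = b4 := by
        have hl : g.leadingCoeff = ((X - C x1) * (X - C x2)).leadingCoeff * h2.leadingCoeff := by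
          rw [hfacg, leadingCoeff_mul]
        rw [leadingCoeff_mul, monic_X_sub_C x1, monic_X_sub_C x2, one_mul, one_mul] at hl
        rw [leadingCoeff, hgd, hglc] at hl
        rw [leadingCoeff, h2d] at hl
        linarith [hl]
      obtain ⟨r, s, hr, hs, hkform⟩ := stepQuad _ _ hfacg (le_of_eq h2d) h2c
      apply final (-(x1 + x2)) (x1 * x2) r s (by linarith) (mul_pos_of_neg_of_neg hx1neg hx2neg) hr hs
      rw [hfacg, hkform]
      simp only [map_neg, map_add, map_mul]
      ring
    · -- complex root z2 of h3
      obtain ⟨l, hfacQ⟩ := h3.quadratic_dvd_of_aeval_eq_zero_im_ne_zero hz2 h2im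
      set Q : ℝ[X] := X ^ 2 - C (2 * z2.re) * X + C (‖z2‖ ^ 2) with hQdef
      have hQd : Q.natDegree = 2 := by rw [hQdef]; compute_degree!
      have hQlc : Q.coeff 2 = 1 := by
        rw [hQdef]
        simp only [coeff_add, coeff_sub, coeff_C_mul, coeff_X_pow, coeff_C, coeff_X]
        norm_num
      have hQ0 : Q ≠ 0 := fun h => by rw [h] at hQlc; simp at hQlc
      have hl0 : l ≠ 0 := fun h => by rw [h, mul_zero] at hfacQ; exact h30 hfacQ
      have hld : l.natDegree = 1 := by
        have := natDegree_mul hQ0 hl0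
        rw [← hfacQ, h3d, hQd] at this
        omega
      have hlc : l.coeff 1 = b4 := by
        have hl : g.leadingCoeff = (X - C x1).leadingCoeff * (Q.leadingCoeff * l.leadingCoeff) := by
          rw [hfac3, hfacQ, leadingCoeff_mul, leadingCoeff_mul]
        rw [monic_X_sub_C x1, one_mul] at hl
        rw [leadingCoeff, hgd, hglc, leadingCoeff, leadingCoeff, hQd, hld, hQlc, one_mul] at hl
        linarith [hl]
      have hlform : l = C b4 * X + C (l.coeff 0) := by
        have := eq_X_add_C_of_natDegree_le_one (le_of_eq hld)
        rwa [hlc] at this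
      set x2 := -(l.coeff 0) / b4 with hx2def
      have hlform2 : l = C b4 * (X - C x2) := by
        rw [hlform, hx2def]
        have : b4 * (-(l.coeff 0) / b4) = -(l.coeff 0) := by field_simp
        rw [mul_sub, ← C_mul, this]
        simp only [map_neg]
        ring
      have hx2g : IsRoot g x2 := by
        rw [hfac3, hfacQ, hlform2]
        simp [IsRoot, eval_mul, eval_sub, eval_X, eval_C]
      have hx2neg : x2 < 0 := hreal x2 hx2g
      have hz2re : z2.re < 0 := hg z2 hz2g
      have hz2norm : (0:ℝ) < ‖z2‖ ^ 2 :=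
        pow_pos (norm_pos_iff.2 (fun h => h2im (by simp [h]))) 2
      have hQform : Q = X ^ 2 + C (-(2 * z2.re)) * X + C (‖z2‖ ^ 2) := by
        rw [hQdef]; simp only [map_neg]; ring
      apply final (-(2 * z2.re)) (‖z2‖ ^ 2) (-(x1 + x2)) (x1 * x2)
        (by linarith) hz2norm (by linarith) (mul_pos_of_neg_of_neg hx1neg hx2neg)
      rw [hfac3, hfacQ, hlform2, hQform]
      simp only [map_neg, map_add, map_mul]
      ring
  · -- complex root z1 of g
    obtain ⟨h, hfacQ⟩ := g.quadratic_dvd_of_aeval_eq_zero_im_ne_zero hz1 h1im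
    set Q : ℝ[X] := X ^ 2 - C (2 * z1.re) * X + C (‖z1‖ ^ 2) with hQdef
    have hQd : Q.natDegree = 2 := by rw [hQdef]; compute_degree!
    have hQlc : Q.coeff 2 = 1 := by
      rw [hQdef]
      simp only [coeff_add, coeff_sub, coeff_C_mul, coeff_X_pow, coeff_C, coeff_X]
      norm_num
    have hQ0 : Q ≠ 0 := fun hh => by rw [hh] at hQlc; simp at hQlc
    have hh0 : h ≠ 0 := fun hh => by rw [hh, mul_zero] at hfacQ; exact hg0 hfacQ
    have hhd : h.natDegree = 2 := by
      have := natDegree_mul hQ0 hh0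
      rw [← hfacQ, hgd, hQd] at this
      omega
    have hhc : h.coeff 2 = b4 := by
      have hl : g.leadingCoeff = Q.leadingCoeff * h.leadingCoeff := by
        rw [hfacQ, leadingCoeff_mul]
      rw [leadingCoeff, hgd, hglc, leadingCoeff, leadingCoeff, hQd, hhd, hQlc] at hl
      linarith [hl]
    obtain ⟨r, s, hr, hs, hkform⟩ := stepQuad _ _ hfacQ (le_of_eq hhd) hhc
    have hz1re : z1.re < 0 := hg z1 hz1
    have hz1norm : (0:ℝ) < ‖z1‖ ^ 2 :=
      pow_pos (norm_pos_iff.2 (fun hh => h1im (by simp [hh]))) 2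
    have hQform : Q = X ^ 2 + C (-(2 * z1.re)) * X + C (‖z1‖ ^ 2) := by
      rw [hQdef]; simp only [map_neg]; ring
    apply final (-(2 * z1.re)) (‖z1‖ ^ 2) r s (by linarith) hz1norm hr hs
    rw [hfacQ, hkform, hQform]
    ring

theorem quartic_gen_hadamard_stable (b0 b1 b2 b3 b4 a0 a1 a2 a3 a4 : ℝ)
    (hb0 : 0 < b0) (hb1 : 0 < b1) (hb2 : 0 < b2) (hb3 : 0 < b3) (hb4 : 0 < b4)
    (ha0 : 0 < a0) (ha1 : 0 < a1) (ha2 : 0 < a2) (ha3 : 0 < a3) (ha4 : 0 < a4)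
    (h1 : a0 * a3 < a1 * a2) (h2 : a1 * a4 < a2 * a3)
    (hg : HurwitzStable (Polynomial.C b0 + Polynomial.C b1 * Polynomial.X +
      Polynomial.C b2 * Polynomial.X ^ 2 + Polynomial.C b3 * Polynomial.X ^ 3 +
      Polynomial.C b4 * Polynomial.X ^ 4)) :
    HurwitzStable (Polynomial.C (a0 * b0) + Polynomial.C (a1 * b1) * Polynomial.X +
      Polynomial.C (a2 * b2) * Polynomial.X ^ 2 + Polynomial.C (a3 * b3) * Polynomial.X ^ 3 +
      Polynomial.C (a4 * b4) * Polynomial.X ^ 4) := by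
  obtain ⟨p, q, r, s, hp, hq, hr, hs, e0, e1, e2, e3⟩ := quartic_factor hb4 hg
  -- Routh-Hurwitz quantities for g
  have hA' : b1 * b4 < b2 * b3 := by
    have key : b2 * b3 - b1 * b4
        = b4 ^ 2 * (p * q + p ^ 2 * r + p * r ^ 2 + r * s) := by
      rw [e1, e2, e3]; ring
    have hbr : 0 < p * q + p ^ 2 * r + p * r ^ 2 + r * s :=
      add_pos (add_pos (add_pos (mul_pos hp hq) (mul_pos (pow_pos hp 2) hr))
        (mul_pos hp (pow_pos hr 2))) (mul_pos hr hs)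
    linarith [mul_pos (pow_pos hb4 2) hbr]
  have hB' : b0 * b3 ^ 2 + b1 ^ 2 * b4 < b1 * b2 * b3 := by
    have key : b1 * b2 * b3 - (b0 * b3 ^ 2 + b1 ^ 2 * b4)
        = b4 ^ 3 * (p * r * (q - s) ^ 2 + p * q * r ^ 3
            + p ^ 2 * r ^ 2 * s + p ^ 2 * q * r ^ 2 + p ^ 3 * r * s) := by
      rw [e0, e1, e2, e3]; ring
    have t0 : 0 ≤ p * r * (q - s) ^ 2 := mul_nonneg (mul_pos hp hr).le (sq_nonneg _)
    have t1 : 0 < p * q * r ^ 3 := mul_pos (mul_pos hp hq) (pow_pos hr 3)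
    have t2 : 0 < p ^ 2 * r ^ 2 * s := mul_pos (mul_pos (pow_pos hp 2) (pow_pos hr 2)) hs
    have t3 : 0 < p ^ 2 * q * r ^ 2 := mul_pos (mul_pos (pow_pos hp 2) hq) (pow_pos hr 2)
    have t4 : 0 < p ^ 3 * r * s := mul_pos (mul_pos (pow_pos hp 3) hr) hs
    have hbr : 0 < p * r * (q - s) ^ 2 + p * q * r ^ 3
        + p ^ 2 * r ^ 2 * s + p ^ 2 * q * r ^ 2 + p ^ 3 * r * s := by linarith
    linarith [mul_pos (pow_pos hb4 3) hbr]
  -- Routh-Hurwitz quantities for the Hadamard-type product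
  have hA2 : (a1 * b1) * (a4 * b4) < (a2 * b2) * (a3 * b3) := by
    linarith [mul_lt_mul_of_pos_right h2 (mul_pos hb1 hb4),
      mul_lt_mul_of_pos_left hA' (mul_pos ha2 ha3)]
  have hB2 : (a0 * b0) * (a3 * b3) ^ 2 + (a1 * b1) ^ 2 * (a4 * b4)
      < (a1 * b1) * (a2 * b2) * (a3 * b3) := by
    have i1 : a1 * a2 * a3 * (b0 * b3 ^ 2 + b1 ^ 2 * b4) < a1 * a2 * a3 * (b1 * b2 * b3) :=
      mul_lt_mul_of_pos_left hB' (by positivity)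
    have i2 : (a0 * a3) * (a3 * (b0 * b3 ^ 2)) < (a1 * a2) * (a3 * (b0 * b3 ^ 2)) :=
      mul_lt_mul_of_pos_right h1 (by positivity)
    have i3 : (a1 * a4) * (a1 * (b1 ^ 2 * b4)) < (a2 * a3) * (a1 * (b1 ^ 2 * b4)) :=
      mul_lt_mul_of_pos_right h2 (by positivity)
    linarith [i1, i2, i3]
  exact routh_quartic_stable (by positivity) (by positivity) (by positivity) (by positivity)
    (by positivity) hA2 hB2
end

section
/- Let m ≤ n be positive integers with m ≥ 3, and let β > 0. If f(s) = Σ_{i=0}^n a_i s^i and g(s) = Σ_{i=0}^m b_i s^i both have positive coefficients and satisfy λ_i(f) < β for i = 2, ..., n−1 and λ_i(g) < β for i = 2, ..., m−1, then each F_j(s) = Σ_{i=0}^m a_{j+i} b_i s^i satisfies λ_i(F_j) < β^2 for i = 2, ..., m−1 and j = 0, ..., n−m. -/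
theorem gen_hadamard_lambda_lt_beta_sq (n m : ℕ) (hm : 3 ≤ m) (hmn : m ≤ n)
    (β : ℝ) (hβ : 0 < β)
    (a b : ℕ → ℝ) (ha : ∀ i ≤ n, 0 < a i) (hb : ∀ i ≤ m, 0 < b i)
    (hf : ∀ i, 2 ≤ i → i ≤ n - 1 → a (i - 2) * a (i + 1) / (a i * a (i - 1)) < β)
    (hg : ∀ i, 2 ≤ i → i ≤ m - 1 → b (i - 2) * b (i + 1) / (b i * b (i - 1)) < β) :
    ∀ j ≤ n - m, ∀ i, 2 ≤ i → i ≤ m - 1 →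
      (a (j + i - 2) * b (i - 2)) * (a (j + i + 1) * b (i + 1)) /
        ((a (j + i) * b i) * (a (j + i - 1) * b (i - 1))) < β ^ 2 := by
  intro j hj i hi2 him
  have ha0 : 0 < a (j + i - 2) := ha _ (by omega)
  have ha1 : 0 < a (j + i - 1) := ha _ (by omega)
  have ha2 : 0 < a (j + i) := ha _ (by omega)
  have ha3 : 0 < a (j + i + 1) := ha _ (by omega)
  have hb0 : 0 < b (i - 2) := hb _ (by omega)
  have hb1 : 0 < b (i - 1) := hb _ (by omega)
  have hb2 : 0 < b i := hb _ (by omega)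
  have hb3 : 0 < b (i + 1) := hb _ (by omega)
  have hX : a (j + i - 2) * a (j + i + 1) / (a (j + i) * a (j + i - 1)) < β :=
    hf (j + i) (by omega) (by omega)
  have hY : b (i - 2) * b (i + 1) / (b i * b (i - 1)) < β := hg i hi2 him
  have key : (a (j + i - 2) * b (i - 2)) * (a (j + i + 1) * b (i + 1)) /
        ((a (j + i) * b i) * (a (j + i - 1) * b (i - 1)))
      = (a (j + i - 2) * a (j + i + 1) / (a (j + i) * a (j + i - 1))) *
        (b (i - 2) * b (i + 1) / (b i * b (i - 1))) := by
    field_simp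
  rw [key, sq]
  exact mul_lt_mul'' hX hY (by positivity) (by positivity)
end

section
/- Let m ≤ n with m ≥ 3. If f(s) = Σ_{i=0}^n a_i s^i has positive coefficients with λ_i(f) < 1 for i = 2, ..., n−1, and g(s) = Σ_{i=0}^m b_i s^i has positive coefficients with λ_2(g) + ... + λ_{m−1}(g) < 1, then for every j = 0, ..., n−m the polynomial F_j(s) = Σ_{i=0}^m a_{j+i} b_i s^i satisfies λ_2(F_j) + ... + λ_{m−1}(F_j) < 1. -/
theorem gen_hadamard_lambda_sum_lt_one (n m : ℕ) (hm : 3 ≤ m) (hmn : m ≤ n)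
    (a b : ℕ → ℝ) (ha : ∀ i ≤ n, 0 < a i) (hb : ∀ i ≤ m, 0 < b i)
    (hf : ∀ i, 2 ≤ i → i ≤ n - 1 → a (i - 2) * a (i + 1) / (a i * a (i - 1)) < 1)
    (hg : ∑ i ∈ Finset.Icc 2 (m - 1), b (i - 2) * b (i + 1) / (b i * b (i - 1)) < 1) :
    ∀ j ≤ n - m,
      ∑ i ∈ Finset.Icc 2 (m - 1),
        (a (j + i - 2) * b (i - 2)) * (a (j + i + 1) * b (i + 1)) /
          ((a (j + i) * b i) * (a (j + i - 1) * b (i - 1))) < 1 := by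
  intro j hj
  have hne : (Finset.Icc 2 (m - 1)).Nonempty := by
    refine ⟨2, Finset.mem_Icc.mpr ⟨le_refl _, ?_⟩⟩
    omega
  have key : ∑ i ∈ Finset.Icc 2 (m - 1),
        (a (j + i - 2) * b (i - 2)) * (a (j + i + 1) * b (i + 1)) /
          ((a (j + i) * b i) * (a (j + i - 1) * b (i - 1)))
      < ∑ i ∈ Finset.Icc 2 (m - 1), b (i - 2) * b (i + 1) / (b i * b (i - 1)) := by
    apply Finset.sum_lt_sum_of_nonempty hne
    intro i hi
    rw [Finset.mem_Icc] at hi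
    obtain ⟨hi2, him⟩ := hi
    have hji2 : 2 ≤ j + i := by omega
    have hjin : j + i ≤ n - 1 := by omega
    have hbpos : ∀ k, k ≤ m → 0 < b k := hb
    have hgi : 0 < b (i - 2) * b (i + 1) / (b i * b (i - 1)) := by
      apply div_pos
      · exact mul_pos (hb _ (by omega)) (hb _ (by omega))
      · exact mul_pos (hb _ (by omega)) (hb _ (by omega))
    have hfi : a (j + i - 2) * a (j + i + 1) / (a (j + i) * a (j + i - 1)) < 1 :=
      hf (j + i) hji2 hjin
    have hfpos : 0 < a (j + i) * a (j + i - 1) :=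
      mul_pos (ha _ (by omega)) (ha _ (by omega))
    have heq : (a (j + i - 2) * b (i - 2)) * (a (j + i + 1) * b (i + 1)) /
          ((a (j + i) * b i) * (a (j + i - 1) * b (i - 1)))
        = (a (j + i - 2) * a (j + i + 1) / (a (j + i) * a (j + i - 1))) *
          (b (i - 2) * b (i + 1) / (b i * b (i - 1))) := by
      field_simp
    rw [heq]
    calc (a (j + i - 2) * a (j + i + 1) / (a (j + i) * a (j + i - 1))) *
          (b (i - 2) * b (i + 1) / (b i * b (i - 1)))
        < 1 * (b (i - 2) * b (i + 1) / (b i * b (i - 1))) := by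
          exact mul_lt_mul_of_pos_right hfi hgi
      _ = b (i - 2) * b (i + 1) / (b i * b (i - 1)) := one_mul _
  exact key.trans hg
end

section
/- Let n ≥ 3 and let f(s) = Σ_{i=0}^n a_i s^i have positive coefficients (not necessarily stable). Then for every m ∈ {3, ..., n} there exists a Hurwitz stable polynomial g(s) = Σ_{i=0}^m b_i s^i with positive coefficients such that every polynomial F_j(s) = Σ_{i=0}^m a_{j+i} b_i s^i (j = 0, ..., n−m) is Hurwitz stable. -/
/-!
In place of the Katkova–Vishnyakova constant `α*` it suffices to use the cruder condition
`16 c_{i+2} c_i ≤ c_{i+1}²` on positive coefficients, which also forces Hurwitz stability: for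
`Re z ≥ 0` the moduli `c_i |z|^i` grow by a factor at least `4` up to some index `k` and decay by
a factor at least `4` from `k + 1` on, so each tail is at most a third of its neighbouring term,
while `Re z ≥ 0` gives `2 |c_k z^k + c_{k+1} z^{k+1}| ≥ c_k |z|^k + c_{k+1} |z|^{k+1}`.

For `b_i = δ^{i²}` we have `b_{i+2} b_i = δ² b_{i+1}²`, so if `a_{i+2} a_i ≤ K a_{i+1}²` on the
finite stretch `a_0, …, a_n`, the coefficients of every `F_j` satisfy the condition as soon as
`16 K δ² ≤ 1`.
-/

open Finset

theorem three_mul_sum_range_succ_le_of_four_mul_le (t : ℕ → ℝ) (N : ℕ) (hN : 0 ≤ t N)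
    (ht : ∀ j < N, 4 * t (j + 1) ≤ t j) : 3 * ∑ j ∈ range N, t (j + 1) ≤ t 0 := by
  induction N generalizing t with
  | zero => simpa using hN
  | succ N ih =>
    have htail := ih (fun j => t (j + 1)) hN fun j hj => ht (j + 1) (by omega)
    rw [sum_range_succ']
    linarith [ht 0 (by omega)]

theorem four_mul_le_of_sixteen_mul_le_sq {w x y : ℝ} (hx : 0 < x) (hy : 0 ≤ y)
    (h : 16 * (w * x) ≤ y ^ 2) (hyx : y ≤ 4 * x) : 4 * w ≤ y := by
  nlinarith

theorem exists_dominant_adjacent_pair (t : ℕ → ℝ) (m : ℕ) (hm : 1 ≤ m) (ht : ∀ i ≤ m, 0 < t i)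
    (hlc : ∀ i, i + 2 ≤ m → 16 * (t (i + 2) * t i) ≤ t (i + 1) ^ 2) :
    ∃ k, k + 1 ≤ m ∧ 3 * ∑ i ∈ range k, t i ≤ t k ∧
      3 * ∑ j ∈ range (m - (k + 1)), t (k + 2 + j) ≤ t (k + 1) := by
  have hex : ∃ k, m ≤ k + 1 ∨ t (k + 1) ≤ 4 * t k := ⟨m - 1, Or.inl (by omega)⟩
  obtain ⟨k, hk, hmin⟩ : ∃ k, (m ≤ k + 1 ∨ t (k + 1) ≤ 4 * t k) ∧
      ∀ i < k, ¬(m ≤ i + 1 ∨ t (i + 1) ≤ 4 * t i) :=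
    ⟨Nat.find hex, Nat.find_spec hex, fun _ => Nat.find_min hex⟩
  have hkm : k + 1 ≤ m := by
    by_contra! hmk
    exact hmin (m - 1) (by omega) (Or.inl (by omega))
  have hgrow : ∀ i < k, 4 * t i ≤ t (i + 1) := fun i hi => by
    have := hmin i hi
    push Not at this
    exact this.2.le
  have hdecay : ∀ i, k ≤ i → i + 2 ≤ m → 4 * t (i + 2) ≤ t (i + 1) := by
    intro i hi
    induction i, hi using Nat.le_induction with
    | base =>
      intro hk2
      have hslow := hk.resolve_left (by omega)
      exact four_mul_le_of_sixteen_mul_le_sq (ht k (by omega)) (ht _ (by omega)).le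
        (hlc k hk2) hslow
    | succ i hki ih =>
      intro hi3
      have hprev := ih (by omega)
      have hslow : t (i + 2) ≤ 4 * t (i + 1) := by linarith [ht (i + 1) (by omega)]
      exact four_mul_le_of_sixteen_mul_le_sq (ht (i + 1) (by omega)) (ht _ (by omega)).le
        (hlc (i + 1) hi3) hslow
  refine ⟨k, hkm, ?_, ?_⟩
  · have := three_mul_sum_range_succ_le_of_four_mul_le (fun j => t (k - j)) k
      (by simpa using (ht 0 (by omega)).le)
      fun j hj => by
        have := hgrow (k - (j + 1)) (by omega)
        rwa [show k - (j + 1) + 1 = k - j by omega] at this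
    rw [← sum_range_reflect]
    convert this using 4 with j <;> omega
  · have := three_mul_sum_range_succ_le_of_four_mul_le (fun j => t (k + 1 + j)) (m - (k + 1))
      (by simpa [show k + 1 + (m - (k + 1)) = m by omega] using (ht m le_rfl).le)
      fun j hj => by
        rw [show k + 1 + (j + 1) = k + j + 2 by omega, show k + 1 + j = k + j + 1 by omega]
        exact hdecay (k + j) (by omega) (by omega)
    convert this using 4 with j
    omega

theorem add_mul_norm_le_two_mul_norm_add_mul {p q : ℝ} {z : ℂ} (hp : 0 ≤ p) (hq : 0 ≤ q)
    (hz : 0 ≤ z.re) : p + q * ‖z‖ ≤ 2 * ‖(p : ℂ) + q * z‖ := by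
  apply le_of_pow_le_pow_left₀ two_ne_zero (by positivity)
  have hz2 : (q * ‖z‖) ^ 2 = (q * z.re) ^ 2 + (q * z.im) ^ 2 := by
    rw [mul_pow, Complex.sq_norm, Complex.normSq_apply]; ring
  have hw2 : ‖(p : ℂ) + q * z‖ ^ 2 = (p + q * z.re) ^ 2 + (q * z.im) ^ 2 := by
    rw [Complex.sq_norm, Complex.normSq_apply]
    simp only [Complex.add_re, Complex.add_im, Complex.mul_re, Complex.mul_im, Complex.ofReal_re,
      Complex.ofReal_im, zero_mul, sub_zero, add_zero, zero_add]
    ring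
  rw [mul_pow, hw2]
  nlinarith [sq_nonneg (p - q * ‖z‖), mul_nonneg (mul_nonneg hp hq) hz]

theorem sum_ofReal_mul_pow_ne_zero (c : ℕ → ℝ) (m : ℕ) (hc : ∀ i ≤ m, 0 < c i)
    (hlc : ∀ i, i + 2 ≤ m → 16 * (c (i + 2) * c i) ≤ c (i + 1) ^ 2) {z : ℂ} (hz : 0 ≤ z.re) :
    ∑ i ∈ range (m + 1), (c i : ℂ) * z ^ i ≠ 0 := by
  intro hsum
  have hc0 := (hc 0 (Nat.zero_le m)).ne'
  rcases eq_or_ne z 0 with rfl | hz0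
  · simp [sum_range_succ', hc0] at hsum
  rcases Nat.eq_zero_or_pos m with rfl | hm
  · simp [hc0] at hsum
  set t : ℕ → ℝ := fun i => c i * ‖z‖ ^ i with ht_def
  have hρ : 0 < ‖z‖ := norm_pos_iff.mpr hz0
  have ht : ∀ i ≤ m, 0 < t i := fun i hi => mul_pos (hc i hi) (pow_pos hρ i)
  have htlc : ∀ i, i + 2 ≤ m → 16 * (t (i + 2) * t i) ≤ t (i + 1) ^ 2 := fun i hi => by
    have hsq : t (i + 2) * t i = c (i + 2) * c i * (‖z‖ ^ (i + 1)) ^ 2 := by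
      simp only [ht_def]; ring
    rw [hsq, show t (i + 1) ^ 2 = c (i + 1) ^ 2 * (‖z‖ ^ (i + 1)) ^ 2 by simp only [ht_def]; ring]
    nlinarith [hlc i hi, sq_nonneg (‖z‖ ^ (i + 1))]
  have hnorm : ∀ i ≤ m, ‖(c i : ℂ) * z ^ i‖ = t i := fun i hi => by
    rw [norm_mul, norm_pow, Complex.norm_real, Real.norm_of_nonneg (hc i hi).le]
  obtain ⟨k, hkm, hlow, hhigh⟩ := exists_dominant_adjacent_pair t m hm ht htlc
  rw [show m + 1 = k + 2 + (m - (k + 1)) by omega, sum_range_add, sum_range_succ,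
    sum_range_succ] at hsum
  have hpair_le : ‖(c k : ℂ) * z ^ k + c (k + 1) * z ^ (k + 1)‖ ≤ (t k + t (k + 1)) / 3 :=
    calc ‖(c k : ℂ) * z ^ k + c (k + 1) * z ^ (k + 1)‖
        = ‖∑ i ∈ range k, (c i : ℂ) * z ^ i +
            ∑ j ∈ range (m - (k + 1)), (c (k + 2 + j) : ℂ) * z ^ (k + 2 + j)‖ := by
          rw [← norm_neg]; congr 1; linear_combination -hsum
      _ ≤ ∑ i ∈ range k, t i + ∑ j ∈ range (m - (k + 1)), t (k + 2 + j) := by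
          refine (norm_add_le _ _).trans (add_le_add ?_ ?_) <;>
            refine norm_sum_le_of_le _ fun i hi => (hnorm _ ?_).le <;>
            simp only [mem_range] at hi <;> omega
      _ ≤ (t k + t (k + 1)) / 3 := by linarith
  have hpair_ge : t k + t (k + 1) ≤ 2 * ‖(c k : ℂ) * z ^ k + c (k + 1) * z ^ (k + 1)‖ := by
    have hfac : (c k : ℂ) * z ^ k + c (k + 1) * z ^ (k + 1) = z ^ k * (c k + c (k + 1) * z) := by
      ring
    have := add_mul_norm_le_two_mul_norm_add_mul (hc k (by omega)).le (hc (k + 1) hkm).le hz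
    rw [hfac, norm_mul, norm_pow]
    calc t k + t (k + 1) = ‖z‖ ^ k * (c k + c (k + 1) * ‖z‖) := by simp only [ht_def]; ring
      _ ≤ ‖z‖ ^ k * (2 * ‖(c k : ℂ) + c (k + 1) * z‖) := by gcongr
      _ = _ := by ring
  linarith [ht k (by omega), ht (k + 1) hkm]

theorem hurwitzStable_of_sixteen_mul_le_sq (c : ℕ → ℝ) (m : ℕ) (hc : ∀ i ≤ m, 0 < c i)
    (hlc : ∀ i, i + 2 ≤ m → 16 * (c (i + 2) * c i) ≤ c (i + 1) ^ 2) :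
    HurwitzStable (∑ i ∈ range (m + 1), Polynomial.C (c i) * Polynomial.X ^ i) := by
  intro z hz
  by_contra! hre
  refine sum_ofReal_mul_pow_ne_zero c m hc hlc hre ?_
  simpa [map_sum] using hz

theorem exists_one_le_mul_le_mul_sq (a : ℕ → ℝ) (n : ℕ) (ha : ∀ i ≤ n, 0 < a i) :
    ∃ K, 1 ≤ K ∧ ∀ i, i + 2 ≤ n → a (i + 2) * a i ≤ K * a (i + 1) ^ 2 := by
  set r : ℕ → ℝ := fun i => a (i + 2) * a i / a (i + 1) ^ 2
  have hr : ∀ i ∈ range (n - 1), 0 ≤ r i := fun i hi => by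
    simp only [mem_range] at hi
    have := ha i (by omega); have := ha (i + 1) (by omega); have := ha (i + 2) (by omega)
    positivity
  refine ⟨1 + ∑ i ∈ range (n - 1), r i, by linarith [sum_nonneg hr], fun i hi => ?_⟩
  have hri : r i ≤ 1 + ∑ i ∈ range (n - 1), r i := by
    linarith [single_le_sum hr (show i ∈ range (n - 1) by simp only [mem_range]; omega)]
  rwa [div_le_iff₀ (pow_pos (ha (i + 1) (by omega)) 2)] at hri

theorem pow_mul_self_mul_pow_mul_self (δ : ℝ) (i : ℕ) :
    δ ^ ((i + 2) * (i + 2)) * δ ^ (i * i) = δ ^ 2 * (δ ^ ((i + 1) * (i + 1))) ^ 2 := by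
  rw [← pow_add, ← pow_mul, ← pow_add]
  ring_nf

theorem sixteen_mul_le_sq_mul_pow_mul_self {a : ℕ → ℝ} {m : ℕ} {K δ : ℝ}
    (hK : ∀ i, i + 2 ≤ m → a (i + 2) * a i ≤ K * a (i + 1) ^ 2) (hδ : 16 * K * δ ^ 2 ≤ 1) (i : ℕ)
    (hi : i + 2 ≤ m) :
    16 * (a (i + 2) * δ ^ ((i + 2) * (i + 2)) * (a i * δ ^ (i * i))) ≤
      (a (i + 1) * δ ^ ((i + 1) * (i + 1))) ^ 2 := by
  set b := δ ^ ((i + 1) * (i + 1))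
  calc 16 * (a (i + 2) * δ ^ ((i + 2) * (i + 2)) * (a i * δ ^ (i * i)))
      = 16 * δ ^ 2 * b ^ 2 * (a (i + 2) * a i) := by
        rw [mul_mul_mul_comm, pow_mul_self_mul_pow_mul_self]; ring
    _ ≤ 16 * δ ^ 2 * b ^ 2 * (K * a (i + 1) ^ 2) :=
        mul_le_mul_of_nonneg_left (hK i hi) (by positivity)
    _ = (16 * K * δ ^ 2) * (a (i + 1) * b) ^ 2 := by ring
    _ ≤ (a (i + 1) * b) ^ 2 := mul_le_of_le_one_left (sq_nonneg _) hδ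

theorem stabilization_by_hadamard_general (n : ℕ) (a : ℕ → ℝ) (ha : ∀ i ≤ n, 0 < a i) :
    ∀ m, 3 ≤ m → m ≤ n → ∃ b : ℕ → ℝ,
      (∀ i ≤ m, 0 < b i) ∧
      HurwitzStable (∑ i ∈ Finset.range (m + 1), Polynomial.C (b i) * Polynomial.X ^ i) ∧
      ∀ j ≤ n - m,
        HurwitzStable
          (∑ i ∈ Finset.range (m + 1), Polynomial.C (a (j + i) * b i) * Polynomial.X ^ i) := by
  intro m _ hmn
  obtain ⟨K, hK1, hK⟩ := exists_one_le_mul_le_mul_sq a n ha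
  set δ := 1 / (4 * K)
  have hδ : 0 < δ := by positivity
  have hδK : 16 * K * δ ^ 2 ≤ 1 := by
    simp only [δ]; field_simp; nlinarith
  refine ⟨fun i => δ ^ (i * i), fun i _ => by positivity, ?_, fun j hj => ?_⟩
  · refine hurwitzStable_of_sixteen_mul_le_sq _ m (fun i _ => by positivity) fun i hi => ?_
    simpa using sixteen_mul_le_sq_mul_pow_mul_self (a := fun _ => 1) (K := 1)
      (fun _ _ => by norm_num) (by nlinarith) i hi
  · exact hurwitzStable_of_sixteen_mul_le_sq _ m
      (fun i hi => mul_pos (ha (j + i) (by omega)) (by positivity))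
      (sixteen_mul_le_sq_mul_pow_mul_self (a := fun i => a (j + i)) (m := m)
        (fun i hi => hK (j + i) (by omega)) hδK)

theorem stabilization_by_hadamard (n : ℕ) (hn : 3 ≤ n) (a : ℕ → ℝ) (ha : ∀ i ≤ n, 0 < a i) :
    ∀ m, 3 ≤ m → m ≤ n → ∃ b : ℕ → ℝ,
      (∀ i ≤ m, 0 < b i) ∧
      HurwitzStable (∑ i ∈ Finset.range (m + 1), Polynomial.C (b i) * Polynomial.X ^ i) ∧
      ∀ j ≤ n - m,
        HurwitzStable
          (∑ i ∈ Finset.range (m + 1), Polynomial.C (a (j + i) * b i) * Polynomial.X ^ i) :=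
  stabilization_by_hadamard_general n a ha
end

section
/- The polynomial f(s) = 2s^4 + 2s^3 + 4s^2 + 2s + 3 satisfies λ_2(f) = 3/4 < 1 and λ_3(f) = 1/2 < 1 but is not Hurwitz stable; hence the inclusion of the stable polynomials of degree 4 in the class {λ_i < 1} is proper. -/
open Polynomial ComplexConjugate

theorem Complex.norm_neg_conj_sub_le_norm_sub {w z : ℂ} (hw : 0 ≤ w.re) (hz : z.re ≤ 0) :
    ‖-conj w - z‖ ≤ ‖w - z‖ := by
  rw [← sq_le_sq₀ (norm_nonneg _) (norm_nonneg _), Complex.sq_norm, Complex.sq_norm,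
    Complex.normSq_apply, Complex.normSq_apply]
  simp only [sub_re, neg_re, conj_re, sub_im, neg_im, conj_im, neg_neg]
  nlinarith [mul_nonpos_of_nonneg_of_nonpos hw hz]

theorem Polynomial.norm_eval_neg_conj_le {p : ℂ[X]} (hp : ∀ z ∈ p.roots, z.re ≤ 0) {w : ℂ}
    (hw : 0 ≤ w.re) : ‖p.eval (-conj w)‖ ≤ ‖p.eval w‖ := by
  have norm_prod (m : Multiset ℂ) : ‖m.prod‖ = (m.map (‖·‖)).prod := map_multiset_prod normHom m
  simp only [(IsAlgClosed.splits p).eval_eq_prod_roots, norm_mul, norm_prod, Multiset.map_map]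
  gcongr
  exact Multiset.prod_map_le_prod_map₀ _ _ (fun _ _ => norm_nonneg _)
    fun z hz => Complex.norm_neg_conj_sub_le_norm_sub hw (hp z hz)

theorem HurwitzStable.norm_aeval_neg_conj_le {f : ℝ[X]} (hf : HurwitzStable f) {w : ℂ}
    (hw : 0 ≤ w.re) : ‖aeval (-conj w) f‖ ≤ ‖aeval w f‖ := by
  simp only [aeval_def, ← eval_map]
  refine norm_eval_neg_conj_le (fun z hz => (hf z ?_).le) hw
  rw [aeval_def, ← eval_map]
  exact (mem_roots'.mp hz).2

theorem example_W4_not_stable :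
    ((3 : ℝ) * 2) / (4 * 2) < 1 ∧ ((2 : ℝ) * 2) / (2 * 4) < 1 ∧
      ¬ HurwitzStable (Polynomial.C 3 + Polynomial.C 2 * Polynomial.X +
          Polynomial.C 4 * Polynomial.X ^ 2 + Polynomial.C 2 * Polynomial.X ^ 3 +
          Polynomial.C 2 * Polynomial.X ^ 4) := by
  refine ⟨by norm_num, by norm_num, fun hstable => ?_⟩
  set f : ℝ[X] := C 3 + C 2 * X + C 4 * X ^ 2 + C 2 * X ^ 3 + C 2 * X ^ 4
  have hle := hstable.norm_aeval_neg_conj_le (w := 1 / 4 + Complex.I) (by norm_num)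
  have hw : aeval (1 / 4 + Complex.I) f = ⟨-59 / 128, 1 / 2⟩ := by
    norm_num [f, Complex.ext_iff, pow_succ]
  have hw' : aeval (-conj (1 / 4 + Complex.I)) f = ⟨189 / 128, 1 / 4⟩ := by
    norm_num [f, Complex.ext_iff, pow_succ]
  rw [hw, hw', ← sq_le_sq₀ (norm_nonneg _) (norm_nonneg _), Complex.sq_norm, Complex.sq_norm,
    Complex.normSq_mk, Complex.normSq_mk] at hle
  norm_num at hle
end

section
/- The polynomial f(s) = 2s^6 + 6s^5 + 12s^4 + 16s^3 + 12s^2 + 10s + 1 is Hurwitz stable, but the truncation f_0(s) = 6s^5 + 12s^4 + 16s^3 + 12s^2 + 10s + 1 obtained by removing the leading term is not Hurwitz stable. -/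
/-!
If every root `r` of a real polynomial `f` has `Re r ≤ 0`, then `|-z̄ - r| ≤ |z - r|` whenever
`Re z ≥ 0`; multiplying over the roots and using `f(-z̄) = conj f(-z)` gives `|f(-z)| ≤ |f(z)|`
on the closed right half-plane. Conversely, this inequality turns a root `z` of `f` with
`Re z ≥ 0` into a root `-z`, so it implies stability as soon as `f` and `f(-X)` have no common
root.

For `f = 2s⁶ + 6s⁵ + 12s⁴ + 16s³ + 12s² + 10s + 1` the inequality comes from a sum-of-squares
decomposition `f(z)f(w) - f(-z)f(-w) = (z + w) ∑ cᵢ gᵢ(z) gᵢ(w)` with `cᵢ > 0`, taken at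
`w = z̄`. The truncation `f₀` violates it at `z = 1/10 + i`.
-/
open Polynomial Complex ComplexConjugate

lemma normSq_neg_conj_sub_le {r z : ℂ} (hr : r.re ≤ 0) (hz : 0 ≤ z.re) :
    normSq (-conj z - r) ≤ normSq (z - r) := by
  simp only [normSq_apply, sub_re, sub_im, neg_re, neg_im, conj_re, conj_im]
  nlinarith [mul_nonpos_of_nonneg_of_nonpos hz hr]

theorem Polynomial.normSq_eval_neg_conj_le {p : ℂ[X]} (hp : ∀ r ∈ p.roots, r.re ≤ 0)
    {z : ℂ} (hz : 0 ≤ z.re) : normSq (p.eval (-conj z)) ≤ normSq (p.eval z) := by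
  rw [← C_leadingCoeff_mul_prod_multiset_X_sub_C (p := p) IsAlgClosed.card_roots_eq_natDegree]
  simp only [eval_mul, eval_C, eval_multiset_prod, Multiset.map_map, Function.comp_def,
    eval_sub, eval_X, map_mul, map_multiset_prod]
  refine mul_le_mul_of_nonneg_left ?_ (normSq_nonneg _)
  exact Multiset.prod_map_le_prod_map₀ _ _ (fun _ _ ↦ normSq_nonneg _)
    fun r hr ↦ normSq_neg_conj_sub_le (hp r hr) hz

theorem HurwitzStable.normSq_aeval_neg_le {f : ℝ[X]} (hf : HurwitzStable f) {z : ℂ}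
    (hz : 0 ≤ z.re) : normSq (aeval (-z) f) ≤ normSq (aeval z f) := by
  have hroots : ∀ r ∈ (f.map (algebraMap ℝ ℂ)).roots, r.re ≤ 0 :=
    fun r hr ↦ (hf r (mem_aroots'.mp hr).2).le
  have := (f.map (algebraMap ℝ ℂ)).normSq_eval_neg_conj_le hroots hz
  rwa [eval_map_algebraMap, eval_map_algebraMap, ← map_neg, aeval_conj, normSq_conj] at this

theorem HurwitzStable.of_normSq_aeval_neg_le {f : ℝ[X]}
    (hf : ∀ z : ℂ, aeval z f = 0 → aeval (-z) f ≠ 0)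
    (hle : ∀ z : ℂ, 0 ≤ z.re → normSq (aeval (-z) f) ≤ normSq (aeval z f)) :
    HurwitzStable f := by
  intro z hz
  by_contra! hre
  have hneg := hle z hre
  rw [hz, map_zero] at hneg
  exact hf z hz (normSq_eq_zero.mp (le_antisymm hneg (normSq_nonneg _)))

section Hermite

variable {ι : Type*} [Fintype ι] {f : ℝ[X]} {c : ι → ℝ} {g : ι → ℝ[X]}

theorem normSq_aeval_sub_normSq_aeval_neg
    (h : ∀ z w : ℂ, aeval z f * aeval w f - aeval (-z) f * aeval (-w) f =
      (z + w) * ∑ i, c i * (aeval z (g i) * aeval w (g i))) (z : ℂ) :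
    normSq (aeval z f) - normSq (aeval (-z) f) =
      2 * z.re * ∑ i, c i * normSq (aeval z (g i)) := by
  have := h z (conj z)
  simp only [aeval_conj, ← map_neg, mul_conj, add_conj] at this
  exact_mod_cast this

theorem normSq_aeval_neg_le_of_hermite (hc : ∀ i, 0 ≤ c i)
    (h : ∀ z w : ℂ, aeval z f * aeval w f - aeval (-z) f * aeval (-w) f =
      (z + w) * ∑ i, c i * (aeval z (g i) * aeval w (g i)))
    {z : ℂ} (hz : 0 ≤ z.re) : normSq (aeval (-z) f) ≤ normSq (aeval z f) := by
  have hsum : 0 ≤ 2 * z.re * ∑ i, c i * normSq (aeval z (g i)) :=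
    mul_nonneg (by linarith) (Finset.sum_nonneg fun i _ ↦ mul_nonneg (hc i) (normSq_nonneg _))
  linarith [normSq_aeval_sub_normSq_aeval_neg h z]

end Hermite

namespace TruncationExample

noncomputable def f : ℝ[X] :=
  C 1 + C 10 * X + C 12 * X ^ 2 + C 16 * X ^ 3 + C 12 * X ^ 4 + C 6 * X ^ 5 + C 2 * X ^ 6

noncomputable def f₀ : ℝ[X] :=
  C 1 + C 10 * X + C 12 * X ^ 2 + C 16 * X ^ 3 + C 12 * X ^ 4 + C 6 * X ^ 5

/- `hermiteWeight` and `hermiteBasis` are the `LDLᵀ` factorisation of the (positive definite)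
Hermite–Bezout matrix of `f`. -/
noncomputable def hermiteWeight : Fin 6 → ℝ :=
  ![20, 208, 524 / 5, 391 / 13, 548 / 131, 1096 / 391]

noncomputable def hermiteBasis : Fin 6 → ℝ[X] :=
  ![C 1 + C (8 / 5) * X ^ 2 + C (3 / 5) * X ^ 4, X + C (57 / 52) * X ^ 3 + C (5 / 26) * X ^ 5,
    X ^ 2 + C (106 / 131) * X ^ 4, X ^ 3 + C (262 / 391) * X ^ 5, X ^ 4, X ^ 5]

lemma hermiteWeight_nonneg (i : Fin 6) : 0 ≤ hermiteWeight i := by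
  fin_cases i <;> norm_num [hermiteWeight]

lemma hermite_identity (z w : ℂ) :
    aeval z f * aeval w f - aeval (-z) f * aeval (-w) f =
      (z + w) * ∑ i, hermiteWeight i * (aeval z (hermiteBasis i) * aeval w (hermiteBasis i)) := by
  simp only [f, hermiteWeight, hermiteBasis, Fin.sum_univ_succ, Fin.sum_univ_zero, map_add,
    map_mul, map_pow, aeval_C, aeval_X, Matrix.cons_val_zero, Matrix.cons_val_succ]
  push_cast
  ring

/- The odd part `2z(z² + 1)(3z² + 5)` of `f` vanishes only at `0`, `±i`, `±i√(5/3)`, where the even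
part `2z⁶ + 12z⁴ + 12z² + 1` takes the values `1`, `-1`, `137/27`. -/
lemma aeval_neg_f_ne_zero {z : ℂ} (hz : aeval z f = 0) : aeval (-z) f ≠ 0 := by
  intro hnz
  simp only [f, map_add, map_mul, map_pow, aeval_C, aeval_X] at hz hnz
  push_cast at hz hnz
  have hodd : z * ((z ^ 2 + 1) * (3 * z ^ 2 + 5)) = 0 := by linear_combination (hz - hnz) / 4
  have heven : 2 * z ^ 6 + 12 * z ^ 4 + 12 * z ^ 2 + 1 = 0 := by linear_combination (hz + hnz) / 2
  rcases mul_eq_zero.mp hodd with h0 | hodd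
  · rw [h0] at heven
    norm_num at heven
  rcases mul_eq_zero.mp hodd with h1 | h53
  · have : (-1 : ℂ) = 0 := by linear_combination heven - (2 * z ^ 4 + 10 * z ^ 2 + 2) * h1
    norm_num at this
  · have : (137 / 27 : ℂ) = 0 := by
      linear_combination heven - (2 / 3 * z ^ 4 + 26 / 9 * z ^ 2 - 22 / 27) * h53
    norm_num at this

theorem hurwitzStable_f : HurwitzStable f :=
  .of_normSq_aeval_neg_le (fun _ ↦ aeval_neg_f_ne_zero)
    fun _ ↦ normSq_aeval_neg_le_of_hermite hermiteWeight_nonneg hermite_identity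

lemma normSq_aeval_f₀_lt :
    normSq (aeval (1 / 10 + I) f₀) < normSq (aeval (-(1 / 10 + I)) f₀) := by
  simp only [f₀, map_add, map_mul, map_pow, aeval_C, aeval_X]
  norm_num [normSq_apply, pow_succ]

theorem not_hurwitzStable_f₀ : ¬ HurwitzStable f₀ := fun h ↦
  normSq_aeval_f₀_lt.not_ge (h.normSq_aeval_neg_le (by norm_num))

end TruncationExample

theorem example_truncation_not_stable :
    HurwitzStable (Polynomial.C 1 + Polynomial.C 10 * Polynomial.X +
        Polynomial.C 12 * Polynomial.X ^ 2 + Polynomial.C 16 * Polynomial.X ^ 3 +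
        Polynomial.C 12 * Polynomial.X ^ 4 + Polynomial.C 6 * Polynomial.X ^ 5 +
        Polynomial.C 2 * Polynomial.X ^ 6) ∧
      ¬ HurwitzStable (Polynomial.C 1 + Polynomial.C 10 * Polynomial.X +
          Polynomial.C 12 * Polynomial.X ^ 2 + Polynomial.C 16 * Polynomial.X ^ 3 +
          Polynomial.C 12 * Polynomial.X ^ 4 + Polynomial.C 6 * Polynomial.X ^ 5) :=
  ⟨TruncationExample.hurwitzStable_f, TruncationExample.not_hurwitzStable_f₀⟩
end
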